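/- arXiv:1903.04761 — 2 statements merged into one kernel-verified Lean document; each statement's English description precedes it below -/
import Mathlib

section
/- A set Ω ⊆ V(G) is a potential maximal clique of G if and only if (1) for every connected component D of G − Ω, N(D) is a proper subset of Ω, and (2) for every pair of distinct vertices x, y ∈ Ω, either xy is an edge of G or there exists a component D of G − Ω with x, y ∈ N(D). -/
open SimpleGraph

variable {V : Type*}

/-- Open neighborhood of a set: vertices outside `D` with a neighbor in `D`. -/
def nbhdSet (G : SimpleGraph V) (D : Set V) : Set V :=
  {v | v ∉ D ∧ ∃ d ∈ D, G.Adj v d}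

/-- `D` is a connected component of `G - X`. -/
def IsCompOf (G : SimpleGraph V) (X : Set V) (D : Set V) : Prop :=
  D.Nonempty ∧ D ⊆ Xᶜ ∧ (G.induce D).Connected ∧
    ∀ u ∈ D, ∀ w, w ∉ X → G.Adj u w → w ∈ D

/-- `D` is a full component for `X`: a component of `G - X` with `N(D) = X`. -/
def IsFullComp (G : SimpleGraph V) (X D : Set V) : Prop :=
  IsCompOf G X D ∧ nbhdSet G D = X

/-- `X` is an `s,t`-separator. -/
def IsSep (G : SimpleGraph V) (X : Set V) (s t : V) : Prop :=
  ∃ (hs : s ∉ X) (ht : t ∉ X),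
    ¬ (G.induce (Xᶜ : Set V)).Reachable ⟨s, hs⟩ ⟨t, ht⟩

/-- `X` is a minimal separator: an inclusion-wise minimal `s,t`-separator for some `s,t`. -/
def IsMinSep (G : SimpleGraph V) (X : Set V) : Prop :=
  ∃ s t, IsSep G X s t ∧ ∀ Y ⊆ X, IsSep G Y s t → Y = X

/-- No induced cycle of length at least 5. -/
def LongHoleFree (G : SimpleGraph V) : Prop :=
  ∀ n, 5 ≤ n → IsEmpty (SimpleGraph.cycleGraph n ↪g G)

/-- The `k`-prism: two `k`-cliques joined by a perfect matching. -/
def prism (k : ℕ) : SimpleGraph (Fin k ⊕ Fin k) where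
  Adj x y := match x, y with
    | Sum.inl i, Sum.inl j => i ≠ j
    | Sum.inr i, Sum.inr j => i ≠ j
    | Sum.inl i, Sum.inr j => i = j
    | Sum.inr i, Sum.inl j => i = j
  symm := ⟨by rintro (i|i) (j|j) h <;> exact h.symm⟩
  loopless := ⟨by rintro (i|i) h <;> exact h rfl⟩

/-- Chordal: no induced cycle of length at least 4. -/
def IsChordal (G : SimpleGraph V) : Prop :=
  ∀ n, 4 ≤ n → IsEmpty (SimpleGraph.cycleGraph n ↪g G)

/-- `Ω` is an inclusion-wise maximal clique of `G`. -/
def IsMaxClique (G : SimpleGraph V) (Ω : Set V) : Prop :=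
  G.IsClique Ω ∧ ∀ Ω', G.IsClique Ω' → Ω ⊆ Ω' → Ω' = Ω

/-- `Ω` is a potential maximal clique of `G`: a maximal clique of some
minimal chordal completion of `G`. -/
def IsPMC (G : SimpleGraph V) (Ω : Set V) : Prop :=
  ∃ H : SimpleGraph V, G ≤ H ∧ IsChordal H ∧
    (∀ H', G ≤ H' → H' ≤ H → IsChordal H' → H' = H) ∧ IsMaxClique H Ω

/-- The family of full components of `G - S`. -/
def fullComps (G : SimpleGraph V) (S : Set V) : Set (Set V) :=
  {D | IsFullComp G S D}

/-- `ζ_G(S) = max(0, #full components of G - S  - 1)`. -/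
noncomputable def zeta (G : SimpleGraph V) (S : Set V) : ℕ :=
  (fullComps G S).ncard - 1



lemma modCases {x N : ℕ} (h2 : x < 2*N) :
    (x < N ∧ x % N = x) ∨ (N ≤ x ∧ x % N = x - N) := by
  rcases Nat.lt_or_ge x N with h | h
  · exact Or.inl ⟨h, Nat.mod_eq_of_lt h⟩
  · refine Or.inr ⟨h, ?_⟩
    rw [Nat.mod_eq_sub_mod h]
    exact Nat.mod_eq_of_lt (by omega)

lemma cycChar {N : ℕ} (hN : 2 ≤ N) (a b : Fin N) :
    (cycleGraph N).Adj a b ↔ (a.val + 1 = b.val ∨ b.val + 1 = a.val ∨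
      (a.val = 0 ∧ b.val = N - 1) ∨ (b.val = 0 ∧ a.val = N - 1)) := by
  rw [cycleGraph_adj']
  have ha := a.isLt
  have hb := b.isLt
  rw [Fin.sub_def, Fin.sub_def]
  simp only [Fin.val_mk]
  rcases modCases (x := N - b.val + a.val) (N := N) (by omega) with ⟨h1, h2⟩ | ⟨h1, h2⟩ <;>
    rcases modCases (x := N - a.val + b.val) (N := N) (by omega) with ⟨h3, h4⟩ | ⟨h3, h4⟩ <;>
      rw [h2, h4] <;> omega

lemma cycFalse (H : SimpleGraph V) (hch : IsChordal H) (N : ℕ) (hN : 4 ≤ N) (g : ℕ → V)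
    (inj : ∀ k < N, ∀ l < N, g k = g l → k = l)
    (adj : ∀ k, k + 1 < N → H.Adj (g k) (g (k+1)))
    (closeAdj : H.Adj (g (N-1)) (g 0))
    (chord : ∀ k l, k + 2 ≤ l → l < N → ¬(k = 0 ∧ l = N - 1) → ¬H.Adj (g k) (g l)) : False := by
  refine (hch N hN).elim ⟨⟨fun i => g i.val, ?_⟩, ?_⟩
  · intro a b hab
    exact Fin.ext (inj _ a.isLt _ b.isLt hab)
  · intro a b
    show H.Adj (g a.val) (g b.val) ↔ _
    rw [cycChar (by omega) a b]
    constructor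
    · intro hAdj
      by_contra hc
      push_neg at hc
      obtain ⟨c1, c2, c3, c4⟩ := hc
      have ha := a.isLt
      have hb := b.isLt
      rcases Nat.lt_trichotomy a.val b.val with h | h | h
      · exact chord a.val b.val (by omega) hb (by omega) hAdj
      · exact H.irrefl (by rwa [show (a:ℕ) = (b:ℕ) from h] at hAdj)
      · exact chord b.val a.val (by omega) ha (by omega) hAdj.symm
    · have ha := a.isLt
      have hb := b.isLt
      rintro (h | h | ⟨h1, h2⟩ | ⟨h1, h2⟩)
      · rw [← h]; exact adj a.val (by omega)
      · rw [← h]; exact (adj b.val (by omega)).symm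
      · rw [h1, h2]; exact closeAdj.symm
      · rw [h1, h2]; exact closeAdj
lemma indAdj {H : SimpleGraph V} {S : Set V} {a b : S} : (H.induce S).Adj a b ↔ H.Adj a b := by simp

lemma length_drop' {H : SimpleGraph V} {u v : V} (p : H.Walk u v) (n : ℕ) :
    (p.drop n).length = p.length - n := by
  induction p generalizing n with
  | nil => cases n <;> simp [Walk.drop]
  | cons h q ih =>
    cases n with
    | zero => simp [Walk.drop]
    | succ m => simp [Walk.drop, ih]

/-- take the first `k` darts of a walk -/
noncomputable def wtake {H : SimpleGraph V} {u v : V} (p : H.Walk u v) (k : ℕ) (hk : k ≤ p.length) :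
    H.Walk u (p.getVert k) :=
  ((p.reverse.drop (p.length - k)).reverse).copy rfl
    (by rw [Walk.getVert_reverse]; congr 1; omega)

lemma length_wtake {H : SimpleGraph V} {u v : V} (p : H.Walk u v) (k : ℕ) (hk : k ≤ p.length) :
    (wtake p k hk).length = k := by
  simp only [wtake, Walk.length_copy, Walk.length_reverse, length_drop']
  omega

/-- An induced path from `x` to `y` with interior contained in `A`;
the pair `(0,n)` is exempted from the chord condition. -/
structure IPath (H : SimpleGraph V) (x y : V) (A : Set V) where
  n : ℕ
  f : ℕ → V
  h2 : 2 ≤ n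
  hx : f 0 = x
  hy : f n = y
  inj : ∀ k, k ≤ n → ∀ l, l ≤ n → f k = f l → k = l
  adj : ∀ k, k < n → H.Adj (f k) (f (k+1))
  chord : ∀ k l, k + 2 ≤ l → l ≤ n → ¬(k = 0 ∧ l = n) → ¬H.Adj (f k) (f l)
  int : ∀ k, 0 < k → k < n → f k ∈ A

lemma IPath.ne {H : SimpleGraph V} {x y : V} {A : Set V} (p : IPath H x y A) : x ≠ y := by
  intro h
  have h1 := p.inj 0 (by omega) p.n (by omega) (by rw [p.hx, p.hy, h])
  have h2 := p.h2
  omega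

lemma mkPath {H : SimpleGraph V} {x y : V} {A : Set V} (hne : x ≠ y) (hnadj : ¬H.Adj x y)
    (reach : (H.induce (insert x (insert y A))).Reachable
      ⟨x, by simp⟩ ⟨y, by simp⟩) : Nonempty (IPath H x y A) := by
  classical
  set S : Set V := insert x (insert y A) with hS
  set K := H.induce S with hK
  set xS : S := ⟨x, by simp [hS]⟩
  set yS : S := ⟨y, by simp [hS]⟩
  set M : Set ℕ := {m | ∃ w : K.Walk xS yS, w.length = m} with hM
  have hMne : M.Nonempty := by
    obtain ⟨w⟩ := reach
    exact ⟨w.length, w, rfl⟩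
  obtain ⟨w, hw⟩ : ∃ w : K.Walk xS yS, w.length = sInf M := Nat.sInf_mem hMne
  set n := sInf M with hn
  have hmin : ∀ w' : K.Walk xS yS, n ≤ w'.length := fun w' => Nat.sInf_le ⟨w', rfl⟩
  set f : ℕ → V := fun k => ((w.getVert k : S) : V) with hf
  have hf0 : f 0 = x := by simp [hf, Walk.getVert_zero, xS]
  have hfn : f n = y := by simp [hf, ← hw, Walk.getVert_length, yS]
  -- injectivity
  have injlem : ∀ k l, k < l → l ≤ n → f k ≠ f l := by
    intro k l hkl hln heq
    have hsub : w.getVert k = w.getVert l := Subtype.ext heq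
    have hkle : k ≤ w.length := by omega
    have := hmin ((wtake w k hkle).append ((w.drop l).copy hsub.symm rfl))
    rw [Walk.length_append, length_wtake, Walk.length_copy, length_drop'] at this
    omega
  -- no chords
  have chordlem : ∀ k l, k + 2 ≤ l → l ≤ n → ¬H.Adj (f k) (f l) := by
    intro k l hkl hln hadj
    have hadj' : K.Adj (w.getVert k) (w.getVert l) := indAdj.mpr hadj
    have hkle : k ≤ w.length := by omega
    have := hmin ((wtake w k hkle).append (Walk.cons hadj' (w.drop l)))
    rw [Walk.length_append, length_wtake, Walk.length_cons, length_drop'] at this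
    omega
  have h2 : 2 ≤ n := by
    rcases Nat.lt_or_ge n 2 with h | h
    · interval_cases n
      · exact absurd (by rw [← hf0, hfn]) hne
      · have had := w.adj_getVert_succ (i := 0) (by omega)
        rw [Walk.getVert_zero] at had
        have h2 : H.Adj x (f 1) := indAdj.mp had
        rw [hfn] at h2
        exact absurd h2 hnadj
    · exact h
  refine ⟨⟨n, f, h2, hf0, hfn, ?_, ?_, ?_, ?_⟩⟩
  · intro k hk l hl heq
    rcases Nat.lt_trichotomy k l with h | h | h
    · exact absurd heq (injlem k l h hl)
    · exact h
    · exact absurd heq.symm (injlem l k h hk)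
  · intro k hkn
    have := w.adj_getVert_succ (i := k) (by omega)
    exact indAdj.mp this
  · exact fun k l h1 h2 _ => chordlem k l h1 h2
  · intro k hk0 hkn
    have hmem : (↑(w.getVert k) : V) ∈ insert x (insert y A) := (w.getVert k).2
    simp only [Set.mem_insert_iff] at hmem
    rcases hmem with h | h | h
    · exact absurd (hf0.trans (show f k = x from h).symm) (injlem 0 k hk0 (by omega))
    · exact absurd ((show f k = y from h).trans hfn.symm) (injlem k n hkn (by omega))
    · exact h

lemma mk2 {H : SimpleGraph V} {x y z : V} (hxz : H.Adj x z) (hzy : H.Adj z y)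
    (hxy : x ≠ y) : Nonempty (IPath H x y ({z} : Set V)) := by
  refine ⟨⟨2, fun k => if k = 0 then x else if k = 1 then z else y, le_rfl, by simp, by simp, ?_, ?_, ?_, ?_⟩⟩
  · have h1 := hxz.ne
    have h2 := hzy.ne
    intro k hk l hl h
    interval_cases k <;> interval_cases l <;> simp_all
  · intro k hk
    interval_cases k <;> simp [hxz, hzy]
  · intro k l h1 h2 h3
    exact absurd ⟨by omega, by omega⟩ h3
  · intro k h1 h2
    have : k = 1 := by omega
    simp [this]

def IPath.take {H : SimpleGraph V} {x y : V} {A : Set V} (p : IPath H x y A) (j : ℕ)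
    (h2j : 2 ≤ j) (hjn : j ≤ p.n) :
    IPath H x (p.f j) {v | ∃ i, 0 < i ∧ i < j ∧ v = p.f i} where
  n := j
  f := p.f
  h2 := h2j
  hx := p.hx
  hy := rfl
  inj := fun k hk l hl => p.inj k (by omega) l (by omega)
  adj := fun k hk => p.adj k (by omega)
  chord := by
    intro k l h1 h2 h3
    refine p.chord k l h1 (by omega) ?_
    rintro ⟨rfl, rfl⟩
    exact h3 ⟨rfl, by omega⟩
  int := fun k h1 h2 => ⟨k, h1, h2, rfl⟩

lemma contra2 {H : SimpleGraph V} {x y : V} {A B : Set V} (hch : IsChordal H)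
    (p : IPath H x y A) (q : IPath H x y B) (hxy : ¬H.Adj x y)
    (hdisj : ∀ v ∈ A, v ∉ B) (hAB : ∀ a ∈ A, ∀ b ∈ B, ¬H.Adj a b) : False := by
  have hp2 := p.h2
  have hq2 := q.h2
  set N := p.n + q.n with hN
  set g : ℕ → V := fun k => if k ≤ p.n then p.f k else q.f (N - k) with hg
  have gLow : ∀ m, m ≤ p.n → g m = p.f m := fun m hm => if_pos hm
  have gHigh : ∀ m, p.n < m → g m = q.f (N - m) := fun m hm => if_neg (by omega)
  have aux : ∀ k l, k < l → l < N → g k ≠ g l := by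
    intro k l hkl hlN heq
    rcases le_or_gt l p.n with hl | hl
    · rw [gLow k (by omega), gLow l hl] at heq
      have := p.inj k (by omega) l (by omega) heq
      omega
    · rcases le_or_gt k p.n with hk | hk
      · rw [gLow k hk, gHigh l hl] at heq
        have hj1 : 1 ≤ N - l := by omega
        have hj2 : N - l ≤ q.n - 1 := by omega
        rcases Nat.eq_zero_or_pos k with rfl | hk0
        · have heq2 : q.f 0 = q.f (N - l) := q.hx.trans (p.hx.symm.trans heq)
          have := q.inj 0 (by omega) (N - l) (by omega) heq2
          omega
        · rcases Nat.eq_or_lt_of_le hk with rfl | hklt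
          · have heq2 : q.f q.n = q.f (N - l) := q.hy.trans (p.hy.symm.trans heq)
            have := q.inj q.n le_rfl (N - l) (by omega) heq2
            omega
          · exact hdisj _ (p.int k hk0 hklt) (by rw [heq]; exact q.int (N - l) (by omega) (by omega))
      · rw [gHigh k hk, gHigh l hl] at heq
        have := q.inj (N - k) (by omega) (N - l) (by omega) heq
        omega
  refine cycFalse H hch N (by omega) g ?_ ?_ ?_ ?_
  · intro k hk l hl heq
    rcases Nat.lt_trichotomy k l with h | h | h
    · exact absurd heq (aux k l h hl)
    · exact h
    · exact absurd heq.symm (aux l k h hk)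
  · intro k hk
    rcases Nat.lt_trichotomy k p.n with h | rfl | h
    · rw [gLow k (by omega), gLow (k+1) (by omega)]
      exact p.adj k h
    · rw [gLow p.n le_rfl, gHigh (p.n+1) (by omega), show N - (p.n+1) = q.n - 1 by omega, p.hy]
      have ha := q.adj (q.n - 1) (by omega)
      rw [show q.n - 1 + 1 = q.n by omega, q.hy] at ha
      exact ha.symm
    · rw [gHigh k h, gHigh (k+1) (by omega)]
      have ha := q.adj (N - (k+1)) (by omega)
      rw [show N - (k+1) + 1 = N - k by omega] at ha
      exact ha.symm
  · rw [gHigh (N-1) (by omega), gLow 0 (by omega), show N - (N-1) = 1 by omega, p.hx]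
    have ha := q.adj 0 (by omega)
    rw [q.hx] at ha
    exact ha.symm
  · intro k l hkl hlN hne0
    rcases le_or_gt l p.n with hl | hl
    · rw [gLow k (by omega), gLow l hl]
      by_cases hc : k = 0 ∧ l = p.n
      · rw [hc.1, hc.2, p.hx, p.hy]
        exact hxy
      · exact p.chord k l hkl (by omega) hc
    · rcases le_or_gt k p.n with hk | hk
      · rw [gLow k hk, gHigh l hl]
        have hj1 : 1 ≤ N - l := by omega
        have hj2 : N - l ≤ q.n - 1 := by omega
        rcases Nat.eq_zero_or_pos k with rfl | hk0
        · rcases Nat.eq_or_lt_of_le (show l ≤ N - 1 by omega) with rfl | hllt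
          · exact absurd ⟨rfl, rfl⟩ hne0
          · have hc := q.chord 0 (N - l) (by omega) (by omega) (by omega)
            rw [q.hx] at hc
            rw [p.hx]
            exact hc
        · rcases Nat.eq_or_lt_of_le hk with rfl | hklt
          · have hc := q.chord (N - l) q.n (by omega) le_rfl (by omega)
            rw [q.hy] at hc
            rw [p.hy]
            intro hadj
            exact hc hadj.symm
          · intro hadj
            exact hAB _ (p.int k hk0 hklt) _ (q.int (N - l) (by omega) (by omega)) hadj
      · rw [gHigh k hk, gHigh l hl]
        intro hadj
        exact q.chord (N - l) (N - k) (by omega) (by omega) (by omega) hadj.symm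

lemma contra1 {H : SimpleGraph V} {x y : V} {A : Set V} (hch : IsChordal H)
    (p : IPath H x y A) (h3 : 3 ≤ p.n) (hxy : H.Adj x y) : False := by
  refine cycFalse H hch (p.n + 1) (by omega) p.f ?_ ?_ ?_ ?_
  · intro k hk l hl heq
    exact p.inj k (by omega) l (by omega) heq
  · intro k hk
    exact p.adj k (by omega)
  · rw [show p.n + 1 - 1 = p.n from rfl, p.hx, p.hy]
    exact hxy.symm
  · intro k l hkl hlN hne0
    exact p.chord k l hkl (by omega) (by simpa using hne0)

def concatPath {H : SimpleGraph V} {x y z : V} {A B : Set V}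
    (p : IPath H x z A) (q : IPath H z y B) (hxy : x ≠ y)
    (hxz : ¬H.Adj x z) (hzy : ¬H.Adj z y) (hxB : x ∉ B) (hyA : y ∉ A)
    (hdisj : ∀ v ∈ A, v ∉ B) (hAB : ∀ a ∈ A, ∀ b ∈ B, ¬H.Adj a b)
    (hxq : ∀ b ∈ B, ¬H.Adj x b) (hyp : ∀ a ∈ A, ¬H.Adj y a) :
    IPath H x y (A ∪ B ∪ {z}) := by
  have hp2 := p.h2
  have hq2 := q.h2
  set g : ℕ → V := fun k => if k ≤ p.n then p.f k else q.f (k - p.n) with hg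
  have gLow : ∀ m, m ≤ p.n → g m = p.f m := fun m hm => if_pos hm
  have gHigh : ∀ m, p.n < m → g m = q.f (m - p.n) := fun m hm => if_neg (by omega)
  refine ⟨p.n + q.n, g, by omega, ?_, ?_, ?_, ?_, ?_, ?_⟩
  · rw [gLow 0 (by omega), p.hx]
  · rw [gHigh (p.n + q.n) (by omega), show p.n + q.n - p.n = q.n by omega, q.hy]
  · have aux : ∀ k l, k < l → l ≤ p.n + q.n → g k ≠ g l := by
      intro k l hkl hlN
      rcases le_or_gt l p.n with hl | hl
      · rw [gLow k (by omega), gLow l hl]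
        intro heq
        have := p.inj k (by omega) l (by omega) heq
        omega
      · rcases le_or_gt k p.n with hk | hk
        · rw [gLow k hk, gHigh l hl]
          have hj1 : 1 ≤ l - p.n := by omega
          have hj2 : l - p.n ≤ q.n := by omega
          intro heq
          rcases Nat.eq_zero_or_pos k with rfl | hk0
          · rw [p.hx] at heq
            rcases Nat.eq_or_lt_of_le hj2 with he | hlt
            · rw [he, q.hy] at heq
              exact hxy heq
            · exact hxB (by rw [heq]; exact q.int (l - p.n) (by omega) hlt)
          · rcases Nat.eq_or_lt_of_le hk with rfl | hklt
            · have heq2 : q.f 0 = q.f (l - p.n) := q.hx.trans (p.hy.symm.trans heq)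
              have := q.inj 0 (by omega) (l - p.n) (by omega) heq2
              omega
            · rcases Nat.eq_or_lt_of_le hj2 with he | hlt
              · rw [he, q.hy] at heq
                exact hyA (by rw [← heq]; exact p.int k hk0 hklt)
              · exact hdisj _ (p.int k hk0 hklt) (by rw [heq]; exact q.int (l - p.n) (by omega) hlt)
        · rw [gHigh k hk, gHigh l (by omega)]
          intro heq
          have := q.inj (k - p.n) (by omega) (l - p.n) (by omega) heq
          omega
    intro k hk l hl heq
    rcases Nat.lt_trichotomy k l with h | h | h
    · exact absurd heq (aux k l h hl)
    · exact h
    · exact absurd heq.symm (aux l k h hk)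
  · intro k hk
    rcases Nat.lt_trichotomy k p.n with h | rfl | h
    · rw [gLow k (by omega), gLow (k+1) (by omega)]
      exact p.adj k h
    · rw [gLow p.n le_rfl, gHigh (p.n+1) (by omega), show p.n + 1 - p.n = 1 by omega, p.hy]
      have ha := q.adj 0 (by omega)
      rw [q.hx] at ha
      exact ha
    · rw [gHigh k h, gHigh (k+1) (by omega), show k + 1 - p.n = (k - p.n) + 1 by omega]
      exact q.adj (k - p.n) (by omega)
  · intro k l hkl hlN hne0
    rcases le_or_gt l p.n with hl | hl
    · rw [gLow k (by omega), gLow l hl]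
      by_cases hc : k = 0 ∧ l = p.n
      · rw [hc.1, hc.2, p.hx, p.hy]
        exact hxz
      · exact p.chord k l hkl (by omega) hc
    · rcases le_or_gt k p.n with hk | hk
      · rw [gLow k hk, gHigh l hl]
        have hj1 : 1 ≤ l - p.n := by omega
        have hj2 : l - p.n ≤ q.n := by omega
        rcases Nat.eq_zero_or_pos k with rfl | hk0
        · rw [p.hx]
          rcases Nat.eq_or_lt_of_le hj2 with he | hlt
          · exact absurd ⟨rfl, by omega⟩ hne0
          · exact hxq _ (q.int (l - p.n) (by omega) hlt)
        · rcases Nat.eq_or_lt_of_le hk with rfl | hklt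
          · rw [p.hy]
            rcases Nat.eq_or_lt_of_le hj2 with he | hlt
            · rw [he, q.hy]
              exact hzy
            · have hc := q.chord 0 (l - p.n) (by omega) (by omega) (by omega)
              rw [q.hx] at hc
              exact hc
          · rcases Nat.eq_or_lt_of_le hj2 with he | hlt
            · rw [he, q.hy]
              intro hadj
              exact hyp _ (p.int k hk0 hklt) hadj.symm
            · exact hAB _ (p.int k hk0 hklt) _ (q.int (l - p.n) (by omega) hlt)
      · rw [gHigh k hk, gHigh l (by omega)]
        exact q.chord (k - p.n) (l - p.n) (by omega) (by omega) (by omega)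
  · intro k hk0 hkN
    rcases Nat.lt_trichotomy k p.n with h | rfl | h
    · rw [gLow k (by omega)]
      exact Or.inl (Or.inl (p.int k hk0 h))
    · rw [gLow p.n le_rfl, p.hy]
      exact Or.inr rfl
    · rw [gHigh k h]
      exact Or.inl (Or.inr (q.int (k - p.n) (by omega) (by omega)))

variable {W : Type*}

def inclHom {G H : SimpleGraph V} {A B : Set V} (hGH : G ≤ H) (hAB : A ⊆ B) :
    G.induce A →g H.induce B where
  toFun := fun a => ⟨a.1, hAB a.2⟩
  map_rel' := by
    intro a b hadj
    simp only [comap_adj, Function.Embedding.coe_subtype] at hadj ⊢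
    exact hGH hadj

lemma reachMono {G H : SimpleGraph V} {A B : Set V} (hGH : G ≤ H) (hAB : A ⊆ B) {u v : V}
    (hu : u ∈ A) (hv : v ∈ A) (h : (G.induce A).Reachable ⟨u, hu⟩ ⟨v, hv⟩) :
    (H.induce B).Reachable ⟨u, hAB hu⟩ ⟨v, hAB hv⟩ :=
  Reachable.map (inclHom hGH hAB) h

/-- The connected component of `v` in `G - X`. -/
def reachSet (G : SimpleGraph V) (X : Set V) (v : V) : Set V :=
  {w | ∃ (hv : v ∈ Xᶜ) (hw : w ∈ Xᶜ), (G.induce Xᶜ).Reachable ⟨v, hv⟩ ⟨w, hw⟩}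

lemma reachSet_subset {G : SimpleGraph V} {X : Set V} {v : V} : reachSet G X v ⊆ Xᶜ :=
  fun _ ⟨_, hw, _⟩ => hw

lemma self_mem_reachSet {G : SimpleGraph V} {X : Set V} {v : V} (hv : v ∉ X) :
    v ∈ reachSet G X v := ⟨hv, hv, Reachable.refl _⟩

lemma reachSet_closed {G : SimpleGraph V} {X : Set V} {v w w' : V}
    (hw : w ∈ reachSet G X v) (hadj : G.Adj w w') (hw' : w' ∉ X) : w' ∈ reachSet G X v := by
  obtain ⟨hv, hww, hr⟩ := hw
  exact ⟨hv, hw', hr.trans (Adj.reachable (by simpa using hadj))⟩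

lemma reachSet_walk_mem {G : SimpleGraph V} {X : Set V} {v : V}
    {a b : (Xᶜ : Set V)} (p : (G.induce (Xᶜ : Set V)).Walk a b)
    (ha : (a : V) ∈ reachSet G X v) :
    (b : V) ∈ reachSet G X v ∧
      ∃ (hb2 : (b : V) ∈ reachSet G X v),
        (G.induce (reachSet G X v)).Reachable ⟨a, ha⟩ ⟨b, hb2⟩ := by
  induction p with
  | nil => exact ⟨ha, ha, Reachable.refl _⟩
  | @cons x' u' b' hadj q ih =>
    have hadj' : G.Adj x' u' := by simpa using hadj
    have hu' : (u' : V) ∈ reachSet G X v := reachSet_closed ha hadj' (by exact u'.2)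
    obtain ⟨hb, hb2, hr⟩ := ih hu'
    refine ⟨hb, hb, Reachable.trans ?_ hr⟩
    exact Adj.reachable (by simpa using hadj')

lemma reachSet_connected {G : SimpleGraph V} {X : Set V} {v : V} (hv : v ∉ X) :
    (G.induce (reachSet G X v)).Connected := by
  rw [connected_iff]
  constructor
  · intro a b
    obtain ⟨_, ha2, hra⟩ := a.2
    obtain ⟨_, hb2, hrb⟩ := b.2
    obtain ⟨pa⟩ := hra
    obtain ⟨pb⟩ := hrb
    obtain ⟨_, h1, r1⟩ := reachSet_walk_mem pa (self_mem_reachSet hv)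
    obtain ⟨_, h2, r2⟩ := reachSet_walk_mem pb (self_mem_reachSet hv)
    have e1 : a = ⟨(⟨a.1, ha2⟩ : (Xᶜ : Set V)).1, h1⟩ := Subtype.ext rfl
    have e2 : b = ⟨(⟨b.1, hb2⟩ : (Xᶜ : Set V)).1, h2⟩ := Subtype.ext rfl
    rw [e1, e2]
    exact r1.symm.trans r2
  · exact ⟨⟨v, self_mem_reachSet hv⟩⟩

lemma isCompOf_reachSet {G : SimpleGraph V} {X : Set V} {v : V} (hv : v ∉ X) :
    IsCompOf G X (reachSet G X v) := by
  refine ⟨⟨v, self_mem_reachSet hv⟩, reachSet_subset, reachSet_connected hv, ?_⟩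
  intro u hu w hw hadj
  exact reachSet_closed hu hadj hw

lemma IsCompOf.eq_reachSet {G : SimpleGraph V} {X D : Set V} (h : IsCompOf G X D) {v : V}
    (hv : v ∈ D) : D = reachSet G X v := by
  obtain ⟨hne, hsub, hconn, hclosed⟩ := h
  apply Set.eq_of_subset_of_subset
  · intro u hu
    have hr : (G.induce D).Reachable ⟨v, hv⟩ ⟨u, hu⟩ := hconn.preconnected _ _
    exact ⟨hsub hv, hsub hu, reachMono (le_refl G) hsub hv hu hr⟩
  · intro w hw
    obtain ⟨hv', hw', hr⟩ := hw
    obtain ⟨p⟩ := hr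
    -- walk from v to w in G - X stays in D
    have : ∀ (a b : (Xᶜ : Set V)) (q : (G.induce (Xᶜ : Set V)).Walk a b), (a : V) ∈ D → (b : V) ∈ D := by
      intro a b q
      induction q with
      | nil => exact id
      | @cons x' u' b' hadj q ih =>
        intro hx
        exact ih (hclosed _ hx _ (by exact u'.2) (by simpa using hadj))
    exact this _ _ p hv

lemma comp_eq_of_mem {G : SimpleGraph V} {X D D' : Set V} {v : V} (hD : IsCompOf G X D)
    (hD' : IsCompOf G X D') (hv : v ∈ D) (hv' : v ∈ D') : D = D' := by
  rw [hD.eq_reachSet hv, hD'.eq_reachSet hv']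

lemma comp_nbhd_subset {G : SimpleGraph V} {X D : Set V} (hD : IsCompOf G X D) :
    nbhdSet G D ⊆ X := by
  intro u ⟨hu, d, hd, hadj⟩
  by_contra hux
  exact hu (hD.2.2.2 d hd u hux hadj.symm)

lemma comp_noAdj {G : SimpleGraph V} {X D D' : Set V} (hD : IsCompOf G X D)
    (hD' : IsCompOf G X D') (hne : D ≠ D') {a b : V} (ha : a ∈ D) (hb : b ∈ D') :
    ¬G.Adj a b := by
  intro hadj
  have hbX : b ∉ X := hD'.2.1 hb
  have : b ∈ D := hD.2.2.2 a ha b hbX hadj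
  exact hne (comp_eq_of_mem hD hD' this hb)

lemma comp_disjoint {G : SimpleGraph V} {X D D' : Set V} (hD : IsCompOf G X D)
    (hD' : IsCompOf G X D') (hne : D ≠ D') {a : V} (ha : a ∈ D) : a ∉ D' :=
  fun h => hne (comp_eq_of_mem hD hD' ha h)

lemma reachThrough {G H' : SimpleGraph V} (hle : G ≤ H') {D : Set V}
    (hconn : (G.induce D).Connected) {x y x' y' : V} (hx' : x' ∈ D) (hy' : y' ∈ D)
    (hax : G.Adj x x') (hay : G.Adj y y') :
    (H'.induce (insert x (insert y D))).Reachable ⟨x, by simp⟩ ⟨y, by simp⟩ := by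
  have hDsub : D ⊆ insert x (insert y D) := fun v hv => Or.inr (Or.inr hv)
  have r1 : (H'.induce (insert x (insert y D))).Reachable ⟨x, by simp⟩ ⟨x', hDsub hx'⟩ :=
    Adj.reachable (indAdj.mpr (hle hax))
  have r2 : (H'.induce (insert x (insert y D))).Reachable ⟨x', hDsub hx'⟩ ⟨y', hDsub hy'⟩ :=
    reachMono hle hDsub hx' hy' (hconn.preconnected _ _)
  have r3 : (H'.induce (insert x (insert y D))).Reachable ⟨y', hDsub hy'⟩ ⟨y, by simp⟩ :=
    Adj.reachable (indAdj.mpr (hle hay.symm))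
  exact (r1.trans r2).trans r3

lemma finAddVal {N : ℕ} (i : Fin N) (k : ℕ) (hk : k < N) :
    (i + (⟨k, hk⟩ : Fin N)).val = (i.val + k) % N := by rw [Fin.add_def]

lemma cycAdjSucc {N : ℕ} (hN : 2 ≤ N) (i : Fin N) :
    (cycleGraph N).Adj i (i + ⟨1, by omega⟩) := by
  rw [cycChar hN, finAddVal]
  have hi := i.isLt
  rcases modCases (x := i.val + 1) (N := N) (by omega) with ⟨h1, h2⟩ | ⟨h1, h2⟩ <;> rw [h2] <;> omega

/-- The completion of `G` determined by `Ω`: make `Ω` and every block `D ∪ N(D)` a clique. -/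
def Hfill (G : SimpleGraph V) (Ω : Set V) : SimpleGraph V where
  Adj u v := u ≠ v ∧ ((u ∈ Ω ∧ v ∈ Ω) ∨
    ∃ D, IsCompOf G Ω D ∧ u ∈ D ∪ nbhdSet G D ∧ v ∈ D ∪ nbhdSet G D)
  symm := ⟨by
    rintro u v ⟨h1, h2⟩
    refine ⟨h1.symm, ?_⟩
    rcases h2 with ⟨a, b⟩ | ⟨D, h, c, d⟩
    exacts [Or.inl ⟨b, a⟩, Or.inr ⟨D, h, d, c⟩]⟩
  loopless := ⟨fun u h => h.1 rfl⟩

lemma hfill_le {G : SimpleGraph V} {Ω : Set V} : G ≤ Hfill G Ω := by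
  intro u v huv
  refine ⟨huv.ne, ?_⟩
  by_cases hu : u ∈ Ω
  · by_cases hv : v ∈ Ω
    · exact Or.inl ⟨hu, hv⟩
    · refine Or.inr ⟨reachSet G Ω v, isCompOf_reachSet hv, Or.inr ?_, Or.inl (self_mem_reachSet hv)⟩
      exact ⟨fun h => (reachSet_subset h) hu, v, self_mem_reachSet hv, huv⟩
  · refine Or.inr ⟨reachSet G Ω u, isCompOf_reachSet hu, Or.inl (self_mem_reachSet hu), ?_⟩
    by_cases hv : v ∈ Ω
    · exact Or.inr ⟨fun h => (reachSet_subset h) hv, u, self_mem_reachSet hu, huv.symm⟩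
    · exact Or.inl (reachSet_closed (self_mem_reachSet hu) huv hv)

lemma hfill_block {G : SimpleGraph V} {Ω : Set V} {D : Set V} (hD : IsCompOf G Ω D) {u v : V}
    (hu : u ∈ D) (hadj : (Hfill G Ω).Adj u v) : v ∈ D ∪ nbhdSet G D := by
  obtain ⟨hne, hcase⟩ := hadj
  rcases hcase with ⟨h1, _⟩ | ⟨D', hD', hu', hv'⟩
  · exact absurd h1 (hD.2.1 hu)
  · rcases hu' with h | h
    · rw [← comp_eq_of_mem hD hD' hu h] at hv'
      exact hv'
    · obtain ⟨hnD', d', hd', hadj'⟩ := h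
      have hd'Ω : d' ∉ Ω := hD'.2.1 hd'
      have hd'D : d' ∈ D := hD.2.2.2 u hu d' hd'Ω hadj'
      exact absurd ((comp_eq_of_mem hD hD' hd'D hd') ▸ hu) hnD'

lemma hfill_noAdj_comps {G : SimpleGraph V} {Ω : Set V} {D D' : Set V} (hD : IsCompOf G Ω D)
    (hD' : IsCompOf G Ω D') (hne : D ≠ D') {a b : V} (ha : a ∈ D) (hb : b ∈ D') :
    ¬(Hfill G Ω).Adj a b := by
  intro h
  rcases hfill_block hD ha h with hb' | hb'
  · exact hne (comp_eq_of_mem hD hD' hb' hb)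
  · exact (hD'.2.1 hb) (comp_nbhd_subset hD hb')

lemma hfill_noAdj_out {G : SimpleGraph V} {Ω : Set V} {D : Set V} (hD : IsCompOf G Ω D)
    {z d : V} (hz : z ∈ Ω) (hzn : z ∉ nbhdSet G D) (hd : d ∈ D) : ¬(Hfill G Ω).Adj z d := by
  intro h
  rcases hfill_block hD hd h.symm with hz' | hz'
  · exact (hD.2.1 hz') hz
  · exact hzn hz'

lemma hfill_chordal {G : SimpleGraph V} {Ω : Set V} : IsChordal (Hfill G Ω) := by
  intro N hN
  constructor
  intro f
  by_cases hall : ∀ i : Fin N, f i ∈ Ω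
  · have hne02 : f ⟨0, by omega⟩ ≠ f ⟨2, by omega⟩ := by
      intro h
      have := f.injective h
      simp only [Fin.mk.injEq] at this
      omega
    have h02 : (Hfill G Ω).Adj (f ⟨0, by omega⟩) (f ⟨2, by omega⟩) :=
      ⟨hne02, Or.inl ⟨hall _, hall _⟩⟩
    have := f.map_rel_iff.mp h02
    rw [cycChar (by omega)] at this
    simp only [Fin.val_mk] at this
    omega
  · push_neg at hall
    obtain ⟨i, hiΩ⟩ := hall
    have hD : IsCompOf G Ω (reachSet G Ω (f i)) := isCompOf_reachSet hiΩ
    have hfi : f i ∈ reachSet G Ω (f i) := self_mem_reachSet hiΩ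
    have hi := i.isLt
    set j : Fin N := i + ⟨1, by omega⟩ with hj
    set k : Fin N := i + ⟨N - 1, by omega⟩ with hk
    have hjval : j.val = (i.val + 1) % N := finAddVal i 1 (by omega)
    have hkval : k.val = (i.val + (N - 1)) % N := finAddVal i (N-1) (by omega)
    have hadjij : (cycleGraph N).Adj i j := cycAdjSucc (by omega) i
    have hadjki : (cycleGraph N).Adj k i := by
      rw [cycChar (by omega)]
      rw [hkval]
      rcases modCases (x := i.val + (N - 1)) (N := N) (by omega) with ⟨h1, h2⟩ | ⟨h1, h2⟩ <;>
        rw [h2] <;> omega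
    have hjkv : j.val ≠ k.val := by
      rw [hjval, hkval]
      rcases modCases (x := i.val + 1) (N := N) (by omega) with ⟨h1, h2⟩ | ⟨h1, h2⟩ <;>
        rcases modCases (x := i.val + (N - 1)) (N := N) (by omega) with ⟨h3, h4⟩ | ⟨h3, h4⟩ <;>
          rw [h2, h4] <;> omega
    have hjk : j ≠ k := fun he => hjkv (congrArg Fin.val he)
    have hcycjk : ¬(cycleGraph N).Adj j k := by
      rw [cycChar (by omega), hjval, hkval]
      rcases modCases (x := i.val + 1) (N := N) (by omega) with ⟨h1, h2⟩ | ⟨h1, h2⟩ <;>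
        rcases modCases (x := i.val + (N - 1)) (N := N) (by omega) with ⟨h3, h4⟩ | ⟨h3, h4⟩ <;>
          rw [h2, h4] <;> omega
    have hfj : f j ∈ reachSet G Ω (f i) ∪ nbhdSet G (reachSet G Ω (f i)) :=
      hfill_block hD hfi (f.map_rel_iff.mpr hadjij)
    have hfk : f k ∈ reachSet G Ω (f i) ∪ nbhdSet G (reachSet G Ω (f i)) :=
      hfill_block hD hfi (f.map_rel_iff.mpr hadjki).symm
    exact hcycjk (f.map_rel_iff.mp ⟨fun h => hjk (f.injective h), Or.inr ⟨_, hD, hfj, hfk⟩⟩)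

lemma hfill_maxclique {G : SimpleGraph V} {Ω : Set V}
    (hyp1 : ∀ D, IsCompOf G Ω D → nbhdSet G D ⊂ Ω) : IsMaxClique (Hfill G Ω) Ω := by
  constructor
  · intro u hu v hv hne
    exact ⟨hne, Or.inl ⟨hu, hv⟩⟩
  · intro Ω' hclique hsub
    refine Set.Subset.antisymm ?_ hsub
    intro v hv
    by_contra hvΩ
    have hD : IsCompOf G Ω (reachSet G Ω v) := isCompOf_reachSet hvΩ
    obtain ⟨z, hz, hzn⟩ := Set.exists_of_ssubset (hyp1 _ hD)
    have hvz : v ≠ z := fun h => hvΩ (h ▸ hz)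
    have hadj : (Hfill G Ω).Adj z v := (hclique (hsub hz) hv hvz.symm)
    exact hfill_noAdj_out hD hz hzn (self_mem_reachSet hvΩ) hadj

lemma exists_min_triang {V : Type*} [Fintype V] (G H0 : SimpleGraph V) (hle : G ≤ H0)
    (hch : IsChordal H0) : ∃ H', G ≤ H' ∧ H' ≤ H0 ∧ IsChordal H' ∧
      ∀ H'', G ≤ H'' → H'' ≤ H' → IsChordal H'' → H'' = H' := by
  classical
  have hfin : Finite (Sym2 V) := by infer_instance
  suffices aux : ∀ n (H0 : SimpleGraph V), G ≤ H0 → IsChordal H0 → H0.edgeSet.ncard ≤ n →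
      ∃ H', G ≤ H' ∧ H' ≤ H0 ∧ IsChordal H' ∧
        ∀ H'', G ≤ H'' → H'' ≤ H' → IsChordal H'' → H'' = H' by
    exact aux H0.edgeSet.ncard H0 hle hch le_rfl
  intro n
  induction n with
  | zero =>
    intro H0 h1 h2 h3
    refine ⟨H0, h1, le_rfl, h2, ?_⟩
    intro H'' g1 g2 g3
    by_contra hne
    have hss : H''.edgeSet ⊂ H0.edgeSet :=
      ⟨edgeSet_mono g2, fun hsub => hne (edgeSet_inj.mp (Set.Subset.antisymm (edgeSet_mono g2) hsub))⟩
    have := Set.ncard_lt_ncard hss (Set.toFinite _)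
    omega
  | succ m ih =>
    intro H0 h1 h2 h3
    by_cases hmin : ∀ H'', G ≤ H'' → H'' ≤ H0 → IsChordal H'' → H'' = H0
    · exact ⟨H0, h1, le_rfl, h2, hmin⟩
    · push_neg at hmin
      obtain ⟨H'', g1, g2, g3, g4⟩ := hmin
      have hss : H''.edgeSet ⊂ H0.edgeSet :=
        ⟨edgeSet_mono g2, fun hsub => g4 (edgeSet_inj.mp (Set.Subset.antisymm (edgeSet_mono g2) hsub))⟩
      have hlt := Set.ncard_lt_ncard hss (Set.toFinite _)
      obtain ⟨H', k1, k2, k3, k4⟩ := ih H'' g1 g3 (by omega)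
      exact ⟨H', k1, k2.trans g2, k3, k4⟩

lemma omega_clique {G H' : SimpleGraph V} {Ω : Set V}
    (hyp1 : ∀ D, IsCompOf G Ω D → nbhdSet G D ⊂ Ω)
    (hyp2 : ∀ x ∈ Ω, ∀ y ∈ Ω, x ≠ y → G.Adj x y ∨
      ∃ D, IsCompOf G Ω D ∧ x ∈ nbhdSet G D ∧ y ∈ nbhdSet G D)
    (hch : IsChordal H') (hGH : G ≤ H') (hHle : H' ≤ Hfill G Ω) :
    ∀ x ∈ Ω, ∀ y ∈ Ω, x ≠ y → H'.Adj x y := by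
  have mkP : ∀ {u v : V} {D : Set V}, u ≠ v → ¬H'.Adj u v →
      IsCompOf G Ω D → u ∈ nbhdSet G D → v ∈ nbhdSet G D → Nonempty (IPath H' u v D) := by
    intro u v D hne hnadj hD huD hvD
    obtain ⟨hu', du, hdu, hadju⟩ := huD
    obtain ⟨hv', dv, hdv, hadjv⟩ := hvD
    exact mkPath hne hnadj (reachThrough hGH hD.2.2.1 hdu hdv hadju hadjv)
  have noE : ∀ {D E : Set V}, IsCompOf G Ω D → IsCompOf G Ω E → D ≠ E →
      ∀ a ∈ D, ∀ b ∈ E, ¬H'.Adj a b :=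
    fun hD hE hne a ha b hb h => hfill_noAdj_comps hD hE hne ha hb (hHle h)
  have noZ : ∀ {D : Set V}, IsCompOf G Ω D → ∀ {z}, z ∈ Ω → z ∉ nbhdSet G D →
      ∀ d ∈ D, ¬H'.Adj z d :=
    fun hD z hz hzn d hd h => hfill_noAdj_out hD hz hzn hd (hHle h)
  have cover : ∀ {u v : V}, u ∈ Ω → v ∈ Ω → u ≠ v → ¬H'.Adj u v →
      ∃ D, IsCompOf G Ω D ∧ u ∈ nbhdSet G D ∧ v ∈ nbhdSet G D := by
    intro u v hu hv hne hnadj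
    rcases hyp2 u hu v hv hne with h | h
    · exact absurd (hGH h) hnadj
    · exact h
  have uniq : ∀ {u v : V} {D E : Set V}, u ≠ v → ¬H'.Adj u v →
      IsCompOf G Ω D → u ∈ nbhdSet G D → v ∈ nbhdSet G D →
      IsCompOf G Ω E → u ∈ nbhdSet G E → v ∈ nbhdSet G E → D = E := by
    intro u v D E hne hnadj hD huD hvD hE huE hvE
    by_contra hDE
    obtain ⟨p⟩ := mkP hne hnadj hD huD hvD
    obtain ⟨q⟩ := mkP hne hnadj hE huE hvE
    exact contra2 hch p q hnadj (fun a ha => comp_disjoint hD hE hDE ha)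
      (fun a ha b hb => noE hD hE hDE a ha b hb)
  intro x hx y hy hne
  by_contra hnadj
  obtain ⟨D, hD, hxD, hyD⟩ := cover hx hy hne hnadj
  obtain ⟨z, hz, hzn⟩ := Set.exists_of_ssubset (hyp1 D hD)
  have hzx : z ≠ x := fun h => hzn (h ▸ hxD)
  have hzy : z ≠ y := fun h => hzn (h ▸ hyD)
  obtain ⟨pD⟩ := mkP hne hnadj hD hxD hyD
  have mixed : ∀ {u v : V}, u ∈ Ω → v ∈ Ω → u ≠ v → ¬H'.Adj u v →
      u ∈ nbhdSet G D → v ∈ nbhdSet G D → z ≠ u → z ≠ v → ¬H'.Adj z u → H'.Adj z v → False := by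
    intro u v hu hv huv hnuv huD hvD hzu hzv hnzu hzv'
    obtain ⟨E, hE, hzE, huE⟩ := cover hz hu hzu hnzu
    have hED : E ≠ D := fun h => hzn (h ▸ hzE)
    have hvE : v ∉ nbhdSet G E := fun hvE' => hED (uniq huv hnuv hE huE hvE' hD huD hvD)
    obtain ⟨pE⟩ := mkP hzu hnzu hE hzE huE
    obtain ⟨pD'⟩ := mkP huv hnuv hD huD hvD
    obtain ⟨hq, hqn⟩ : ∃ r : IPath H' z v (E ∪ D ∪ {u}), r.n = pE.n + pD'.n :=
      ⟨concatPath pE pD' hzv hnzu hnuv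
      (show z ∉ D from fun h => (hD.2.1 h) hz)
      (show v ∉ E from fun h => (hE.2.1 h) hv)
      (fun a ha => comp_disjoint hE hD hED ha)
      (fun a ha b hb => noE hE hD hED a ha b hb)
      (fun b hb => noZ hD hz hzn b hb)
      (fun a ha => noZ hE hv hvE a ha), rfl⟩
    have hn3 : 3 ≤ hq.n := by
      have h1 := pE.h2
      have h2 := pD'.h2
      omega
    exact contra1 hch hq hn3 hzv'
  by_cases hzxAdj : H'.Adj z x
  · by_cases hzyAdj : H'.Adj z y
    · obtain ⟨q2⟩ := mk2 hzxAdj.symm hzyAdj hne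
      refine contra2 hch pD q2 hnadj ?_ ?_
      · intro a ha haz
        rw [Set.mem_singleton_iff] at haz
        exact (hD.2.1 ha) (haz ▸ hz)
      · intro a ha b hb
        rw [Set.mem_singleton_iff] at hb
        subst hb
        exact fun h => noZ hD hz hzn a ha h.symm
    · exact mixed hy hx hne.symm (fun h => hnadj h.symm) hyD hxD hzy hzx hzyAdj hzxAdj
  · by_cases hzyAdj : H'.Adj z y
    · exact mixed hx hy hne hnadj hxD hyD hzx hzy hzxAdj hzyAdj
    · obtain ⟨E, hE, hzE, hxE⟩ := cover hz hx hzx hzxAdj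
      obtain ⟨F, hF, hzF, hyF⟩ := cover hz hy hzy hzyAdj
      have hED : E ≠ D := fun h => hzn (h ▸ hzE)
      have hFD : F ≠ D := fun h => hzn (h ▸ hzF)
      have hEF : E ≠ F := by
        intro h
        subst h
        exact hED (uniq hne hnadj hE hxE hyF hD hxD hyD)
      have hyE : y ∉ nbhdSet G E := fun hyE' => hED (uniq hne hnadj hE hxE hyE' hD hxD hyD)
      have hxF : x ∉ nbhdSet G F := fun hxF' => hFD (uniq hne hnadj hF hxF' hyF hD hxD hyD)
      obtain ⟨pE⟩ := mkP (fun h => hzx h.symm) (fun h => hzxAdj h.symm) hE hxE hzE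
      obtain ⟨pF⟩ := mkP hzy hzyAdj hF hzF hyF
      have hq := concatPath pE pF hne (fun h => hzxAdj h.symm) hzyAdj
        (show x ∉ F from fun h => (hF.2.1 h) hx)
        (show y ∉ E from fun h => (hE.2.1 h) hy)
        (fun a ha => comp_disjoint hE hF hEF ha)
        (fun a ha b hb => noE hE hF hEF a ha b hb)
        (fun b hb => noZ hF hx hxF b hb)
        (fun a ha => noZ hE hy hyE a ha)
      refine contra2 hch pD hq hnadj ?_ ?_
      · intro a ha
        rintro ((h | h) | h)
        · exact comp_disjoint hD hE (fun he => hED he.symm) ha h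
        · exact comp_disjoint hD hF (fun he => hFD he.symm) ha h
        · rw [Set.mem_singleton_iff] at h
          exact (hD.2.1 ha) (h ▸ hz)
      · intro a ha b hb
        rcases hb with (h | h) | h
        · exact noE hD hE (fun he => hED he.symm) a ha b h
        · exact noE hD hF (fun he => hFD he.symm) a ha b h
        · rw [Set.mem_singleton_iff] at h
          subst h
          exact fun hadj => noZ hD hz hzn a ha hadj.symm

lemma sufficiency [Fintype V] (G : SimpleGraph V) (Ω : Set V)
    (hyp1 : ∀ D, IsCompOf G Ω D → nbhdSet G D ⊂ Ω)
    (hyp2 : ∀ x ∈ Ω, ∀ y ∈ Ω, x ≠ y → G.Adj x y ∨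
      ∃ D, IsCompOf G Ω D ∧ x ∈ nbhdSet G D ∧ y ∈ nbhdSet G D) : IsPMC G Ω := by
  obtain ⟨H', h1, h2, h3, h4⟩ := exists_min_triang G (Hfill G Ω) hfill_le hfill_chordal
  refine ⟨H', h1, h3, h4, ?_, ?_⟩
  · intro u hu v hv hne
    exact omega_clique hyp1 hyp2 h3 h1 h2 u hu v hv hne
  · intro Ω' hclique hsub
    exact (hfill_maxclique hyp1).2 Ω' (fun u hu v hv hne => h2 (hclique hu hv hne)) hsub

lemma exists_least {P : ℕ → Prop} (h : ∃ n, P n) : ∃ n, P n ∧ ∀ m < n, ¬P m := by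
  classical
  exact ⟨Nat.find h, Nat.find_spec h, fun m hm => Nat.find_min h hm⟩

lemma L1 [Fintype V] {H : SimpleGraph V} (hch : IsChordal H) :
    ∀ (C W : Set V), H.IsClique C → (H.induce W).Connected → (∀ c ∈ C, c ∉ W) →
      (∀ c ∈ C, ∃ w ∈ W, H.Adj c w) → W.Nonempty → ∃ w ∈ W, ∀ c ∈ C, H.Adj c w := by
  suffices aux : ∀ n (C W : Set V), C.ncard ≤ n → H.IsClique C → (H.induce W).Connected →
      (∀ c ∈ C, c ∉ W) → (∀ c ∈ C, ∃ w ∈ W, H.Adj c w) → W.Nonempty →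
      ∃ w ∈ W, ∀ c ∈ C, H.Adj c w by
    intro C W h1 h2 h3 h4 h5
    exact aux C.ncard C W le_rfl h1 h2 h3 h4 h5
  intro n
  induction n with
  | zero =>
    intro C W hn _ _ _ _ hWne
    have hC : C = ∅ := Set.ncard_eq_zero (Set.toFinite C) |>.mp (by omega)
    obtain ⟨w, hw⟩ := hWne
    exact ⟨w, hw, by simp [hC]⟩
  | succ m ih =>
    intro C W hn hcl hconn hdisj hdom hWne
    rcases Set.eq_empty_or_nonempty C with rfl | ⟨c, hc⟩
    · obtain ⟨w, hw⟩ := hWne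
      exact ⟨w, hw, by simp⟩
    · have hC' : (C \ {c}).ncard ≤ m := by
        have := Set.ncard_diff_singleton_lt_of_mem hc (Set.toFinite C)
        omega
      obtain ⟨w, hwW, hwadj⟩ := ih (C \ {c}) W hC' (hcl.subset Set.diff_subset) hconn
        (fun c' hc' => hdisj c' hc'.1) (fun c' hc' => hdom c' hc'.1) hWne
      by_cases hcw : H.Adj c w
      · refine ⟨w, hwW, ?_⟩
        intro c' hc'
        rcases eq_or_ne c' c with rfl | hne
        · exact hcw
        · exact hwadj c' ⟨hc', hne⟩
      · -- build induced path from c to w through W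
        have hcW : c ∉ W := hdisj c hc
        have hcne : c ≠ w := fun h => hcW (h ▸ hwW)
        obtain ⟨w0, hw0W, hw0adj⟩ := hdom c hc
        have hsub : W ⊆ insert c (insert w W) := fun v hv => Or.inr (Or.inr hv)
        have reach : (H.induce (insert c (insert w W))).Reachable ⟨c, by simp⟩ ⟨w, by simp⟩ := by
          have r1 : (H.induce (insert c (insert w W))).Reachable ⟨c, by simp⟩ ⟨w0, hsub hw0W⟩ :=
            Adj.reachable (indAdj.mpr hw0adj)
          have r2 : (H.induce (insert c (insert w W))).Reachable ⟨w0, hsub hw0W⟩ ⟨w, hsub hwW⟩ :=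
            reachMono (le_refl H) hsub hw0W hwW (hconn.preconnected _ _)
          exact r1.trans r2
        obtain ⟨q⟩ := mkPath hcne hcw reach
        -- for every c' in C \ {c}, the least neighbor index on q is 1
        have hkey : ∀ c' ∈ C \ {c}, H.Adj c' (q.f 1) := by
          intro c' hc'
          obtain ⟨j0, ⟨hj01, hj0adj⟩, hj0min'⟩ :=
            exists_least (P := fun j => 1 ≤ j ∧ H.Adj c' (q.f j))
              ⟨q.n, by have := q.h2; omega, by rw [q.hy]; exact hwadj c' hc'⟩
          have hj0n : j0 ≤ q.n := by
            by_contra hcon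
            exact hj0min' q.n (by omega)
              ⟨by have := q.h2; omega, by rw [q.hy]; exact hwadj c' hc'⟩
          have hj0min : ∀ i, 1 ≤ i → i < j0 → ¬H.Adj c' (q.f i) := fun i h1 h2 ha =>
            hj0min' i h2 ⟨h1, ha⟩
          rcases Nat.lt_or_ge j0 2 with h | h
          · have : j0 = 1 := by omega
            rwa [← this]
          · -- contradiction via chordless cycle
            exfalso
            have hccadj : H.Adj c c' := hcl hc hc'.1 (fun h => hc'.2 h.symm)
            have hcfj : c ≠ q.f j0 := by
              intro h
              have := q.inj 0 (by omega) j0 (by omega) (by rw [q.hx]; exact h)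
              omega
            obtain ⟨p2⟩ := mk2 hccadj hj0adj hcfj
            have hnadjcj : ¬H.Adj c (q.f j0) := by
              rcases Nat.eq_or_lt_of_le hj0n with he | hlt
              · rw [he, q.hy]; exact hcw
              · have := q.chord 0 j0 (by omega) (by omega) (by omega)
                rwa [q.hx] at this
            refine contra2 hch (q.take j0 h hj0n) p2 hnadjcj ?_ ?_
            · rintro v ⟨i, hi1, hij, rfl⟩ hv
              rw [Set.mem_singleton_iff] at hv
              have : q.f i ∈ W := q.int i hi1 (by omega)
              exact hdisj c' hc'.1 (hv ▸ this)
            · rintro a ⟨i, hi1, hij, rfl⟩ b hb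
              rw [Set.mem_singleton_iff] at hb
              subst hb
              exact fun hadj => hj0min i hi1 hij hadj.symm
        have hq1W : q.f 1 ∈ W := q.int 1 (by omega) (by have := q.h2; omega)
        refine ⟨q.f 1, hq1W, ?_⟩
        intro c'' hc''
        rcases eq_or_ne c'' c with rfl | hne
        · have := q.adj 0 (by have := q.h2; omega)
          rwa [q.hx] at this
        · exact hkey c'' ⟨hc'', hne⟩

lemma necessity1 [Fintype V] {G H : SimpleGraph V} {Ω : Set V} (hle : G ≤ H)
    (hch : IsChordal H) (hmax : IsMaxClique H Ω) :
    ∀ D, IsCompOf G Ω D → nbhdSet G D ⊂ Ω := by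
  intro D hD
  refine (Set.ssubset_iff_subset_ne).mpr ⟨comp_nbhd_subset hD, ?_⟩
  intro heq
  have hconnH : (H.induce D).Connected := by
    have : (G.induce D) ≤ (H.induce D) := fun u v h => by
      simp only [comap_adj, Function.Embedding.coe_subtype] at h ⊢
      exact hle h
    exact (hD.2.2.1).mono this
  obtain ⟨w, hwD, hwadj⟩ := L1 hch Ω D hmax.1 hconnH (fun c hc => fun hcD => (hD.2.1 hcD) hc)
    (by
      intro c hc
      rw [← heq] at hc
      obtain ⟨_, d, hd, hadj⟩ := hc
      exact ⟨d, hd, hle hadj⟩) hD.1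
  have hwΩ : w ∉ Ω := hD.2.1 hwD
  have hclique : H.IsClique (insert w Ω) := by
    intro a ha b hb hne
    rcases ha with rfl | ha
    · rcases hb with rfl | hb
      · exact absurd rfl hne
      · exact (hwadj b hb).symm
    · rcases hb with rfl | hb
      · exact hwadj a ha
      · exact hmax.1 ha hb hne
  have := hmax.2 _ hclique (Set.subset_insert w Ω)
  exact hwΩ (this ▸ Set.mem_insert w Ω)

/-- `S` separates `a` from `b` in `H`. -/
def SepIn (H : SimpleGraph V) (S : Set V) (a b : V) : Prop :=
  a ∉ S ∧ b ∉ S ∧ b ∉ reachSet H S a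

lemma reachSet_symm_mem {H : SimpleGraph V} {S : Set V} {a b : V}
    (hb : b ∈ reachSet H S a) : a ∈ reachSet H S b := by
  obtain ⟨h1, h2, hr⟩ := hb
  exact ⟨h2, h1, hr.symm⟩

lemma SepIn.symm {H : SimpleGraph V} {S : Set V} {a b : V} (h : SepIn H S a b) :
    SepIn H S b a := ⟨h.2.1, h.1, fun hc => h.2.2 (reachSet_symm_mem hc)⟩

lemma sepIn_nbhd {H : SimpleGraph V} {a b : V} (hne : a ≠ b) (hnadj : ¬H.Adj a b) :
    SepIn H {v | H.Adj a v} a b := by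
  refine ⟨fun h => H.irrefl h, hnadj, ?_⟩
  intro hb
  obtain ⟨h1, h2, ⟨p⟩⟩ := hb
  have hpnil : ¬p.Nil := by
    intro hnil
    have h0 := p.getVert_zero
    have hlen := p.getVert_length
    rw [SimpleGraph.Walk.nil_iff_length_eq.mp hnil] at hlen
    exact hne (congrArg Subtype.val (h0.symm.trans hlen))
  have hadj := p.adj_snd hpnil
  have hadj' : H.Adj a (p.getVert 1 : V) := indAdj.mp hadj
  exact (p.getVert 1).2 hadj'

lemma sep_minimal {V : Type*} [Fintype V] {H : SimpleGraph V} {S : Set V} {a b : V}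
    (h : SepIn H S a b) : ∃ S', S' ⊆ S ∧ SepIn H S' a b ∧
      ∀ Y ⊆ S', SepIn H Y a b → Y = S' := by
  classical
  suffices aux : ∀ n (S : Set V), SepIn H S a b → S.ncard ≤ n →
      ∃ S', S' ⊆ S ∧ SepIn H S' a b ∧ ∀ Y ⊆ S', SepIn H Y a b → Y = S' by
    exact aux S.ncard S h le_rfl
  intro n
  induction n with
  | zero =>
    intro S hS hn
    refine ⟨S, le_rfl, hS, ?_⟩
    intro Y hY hsepY
    have : S = ∅ := Set.ncard_eq_zero (Set.toFinite S) |>.mp (by omega)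
    subst this
    exact Set.subset_eq_empty hY rfl
  | succ m ih =>
    intro S hS hn
    by_cases hmin : ∀ Y ⊆ S, SepIn H Y a b → Y = S
    · exact ⟨S, le_rfl, hS, hmin⟩
    · push_neg at hmin
      obtain ⟨Y, hY1, hY2, hY3⟩ := hmin
      have hss : Y ⊂ S := ⟨hY1, fun hcon => hY3 (Set.Subset.antisymm hY1 hcon)⟩
      have := Set.ncard_lt_ncard hss (Set.toFinite S)
      obtain ⟨S', k1, k2, k3⟩ := ih Y hY2 (by omega)
      exact ⟨S', k1.trans hY1, k2, k3⟩

lemma sep_full {V : Type*} {H : SimpleGraph V} {S : Set V} {a b : V}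
    (hsep : SepIn H S a b) (hmin : ∀ Y ⊆ S, SepIn H Y a b → Y = S) :
    ∀ u ∈ S, u ∈ nbhdSet H (reachSet H S a) := by
  intro u hu
  have hbr : b ∈ reachSet H (S \ {u}) a := by
    by_contra hbr
    have heq := hmin (S \ {u}) Set.diff_subset
      ⟨fun hc => hsep.1 hc.1, fun hc => hsep.2.1 hc.1, hbr⟩
    have : u ∈ S \ {u} := by rw [heq]; exact hu
    exact this.2 rfl
  obtain ⟨ha', hb', ⟨p⟩⟩ := hbr
  have claim : ∀ (v w : ((S \ {u})ᶜ : Set V)) (_ : (H.induce ((S \ {u})ᶜ : Set V)).Walk v w),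
      (v : V) ∈ reachSet H S a → (w : V) = b → u ∈ nbhdSet H (reachSet H S a) := by
    intro v w q
    induction q with
    | nil =>
      intro hv hw
      exact absurd (hw ▸ hv) hsep.2.2
    | @cons v' u' w' hadj q ih =>
      intro hv hw
      have hadj' : H.Adj (v' : V) (u' : V) := indAdj.mp hadj
      by_cases hvu : (u' : V) = u
      · refine ⟨fun hc => (reachSet_subset hc) hu, v', hv, ?_⟩
        have h2 := hadj'.symm
        rw [hvu] at h2
        exact h2
      · have hu'S : (u' : V) ∉ S := by
          intro hcon
          exact u'.2 ⟨hcon, hvu⟩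
        exact ih (reachSet_closed hv hadj' hu'S) hw
  exact claim ⟨a, ha'⟩ ⟨b, hb'⟩ p (self_mem_reachSet hsep.1) rfl

lemma sep_sides_disjoint {H : SimpleGraph V} {S : Set V} {a b : V} (hsep : SepIn H S a b) :
    ∀ w ∈ reachSet H S a, w ∉ reachSet H S b := by
  intro w hwa hwb
  obtain ⟨h1, h2, r1⟩ := hwa
  obtain ⟨h3, h4, r2⟩ := hwb
  exact hsep.2.2 ⟨h1, h3, r1.trans r2.symm⟩

lemma sep_sides_noAdj {H : SimpleGraph V} {S : Set V} {a b : V} (hsep : SepIn H S a b) :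
    ∀ w ∈ reachSet H S a, ∀ w' ∈ reachSet H S b, ¬H.Adj w w' := by
  intro w hw w' hw' hadj
  have hw'S : w' ∉ S := (reachSet_subset hw')
  exact sep_sides_disjoint hsep _ (reachSet_closed hw hadj hw'S) hw'

lemma sep_clique {H : SimpleGraph V} {S : Set V} {a b : V} (hch : IsChordal H)
    (hsep : SepIn H S a b) (hmin : ∀ Y ⊆ S, SepIn H Y a b → Y = S) :
    ∀ u ∈ S, ∀ v ∈ S, u ≠ v → H.Adj u v := by
  intro u hu v hv hne
  by_contra hnadj
  have hCa := isCompOf_reachSet (G := H) (X := S) (v := a) hsep.1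
  have hCb := isCompOf_reachSet (G := H) (X := S) (v := b) hsep.2.1
  have hminb : ∀ Y ⊆ S, SepIn H Y b a → Y = S := fun Y hY hsepY => hmin Y hY hsepY.symm
  obtain ⟨hu1, du, hdu, hadju⟩ := sep_full hsep hmin u hu
  obtain ⟨hv1, dv, hdv, hadjv⟩ := sep_full hsep hmin v hv
  obtain ⟨hu2, eu, heu, hadju2⟩ := sep_full hsep.symm hminb u hu
  obtain ⟨hv2, ev, hev, hadjv2⟩ := sep_full hsep.symm hminb v hv
  obtain ⟨pA⟩ := mkPath hne hnadj (reachThrough (le_refl H) hCa.2.2.1 hdu hdv hadju hadjv)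
  obtain ⟨pB⟩ := mkPath hne hnadj (reachThrough (le_refl H) hCb.2.2.1 heu hev hadju2 hadjv2)
  exact contra2 hch pA pB hnadj (fun w hw => sep_sides_disjoint hsep w hw)
    (fun w hw w' hw' => sep_sides_noAdj hsep w hw w' hw')

open Fin.CommRing

lemma sub_val_ne_zero {N : ℕ} [NeZero N] {i j : Fin N} (hne : i ≠ j) : (j - i).val ≠ 0 := by
  intro h
  have h2 : j - i = 0 := Fin.ext (by simpa using h)
  exact hne (sub_eq_zero.mp h2).symm

lemma sub_val_sum {N : ℕ} [NeZero N] (i j : Fin N) (hne : i ≠ j) :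
    (j - i).val + (i - j).val = N := by
  have h1 : (j - i) + (i - j) = 0 := by ring
  have h2 : ((j - i).val + (i - j).val) % N = 0 := by
    have := congrArg Fin.val (Fin.add_def (j - i) (i - j) ▸ h1)
    simpa using this
  have d1 := (j - i).isLt
  have d2 := (i - j).isLt
  have n1 := sub_val_ne_zero hne
  have n2 := sub_val_ne_zero hne.symm
  rcases modCases (x := (j - i).val + (i - j).val) (N := N) (by omega) with ⟨h3, h4⟩ | ⟨h3, h4⟩ <;>
    omega

lemma natCast_val_eq {N : ℕ} [NeZero N] (m : ℕ) (hm : m < N) : ((m : Fin N)).val = m := by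
  rw [Fin.val_natCast]
  exact Nat.mod_eq_of_lt hm

lemma arc_crush {H H' : SimpleGraph V} (hch : IsChordal H) (hH'le : H' ≤ H) {x y : V}
    (hadjxy : H.Adj x y)
    (hmiss : ∀ u v, H.Adj u v → ¬H'.Adj u v → (u = x ∧ v = y) ∨ (u = y ∧ v = x))
    {M : ℕ} (f : cycleGraph (M+4) ↪g H') {i j : Fin (M+4)}
    (hfi : f i = x) (hfj : f j = y) (hij : ¬(cycleGraph (M+4)).Adj i j) (hne : i ≠ j) :
    (j - i).val = 2 := by
  have hd0 : (j - i).val ≠ 0 := sub_val_ne_zero hne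
  have hdlt := (j - i).isLt
  have hsum := sub_val_sum i j hne
  have hd1 : (j - i).val ≠ 1 := fun h => hij (cycleGraph_adj'.mpr (Or.inr h))
  have hdN1 : (j - i).val ≠ (M+4) - 1 := by
    intro h
    exact hij (cycleGraph_adj'.mpr (Or.inl (by omega)))
  set d := (j - i).val with hd
  by_contra hd2
  have hd3 : 3 ≤ d := by omega
  have hdN2 : d ≤ (M+4) - 2 := by omega
  -- helper facts
  have hcast : ∀ m, m < (M+4) → ((m : Fin (M+4))).val = m := fun m hm => natCast_val_eq m hm
  have hiadd : i + (↑d : Fin (M+4)) = j := by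
    have h1 : (↑d : Fin (M+4)) = j - i := Fin.ext (by rw [hcast d (by omega)])
    rw [h1]
    abel
  have hinj : ∀ k l, k < (M+4) → l < (M+4) → (i + (↑k : Fin (M+4))) = (i + (↑l : Fin (M+4))) → k = l := by
    intro k l hk hl h
    have h2 : (↑k : Fin (M+4)) = (↑l : Fin (M+4)) := add_left_cancel h
    have h3 := congrArg Fin.val h2
    rwa [hcast k hk, hcast l hl] at h3
  have hsucc : ∀ k : ℕ, i + (↑(k+1) : Fin (M+4)) = (i + (↑k : Fin (M+4))) + 1 := by
    intro k
    rw [Nat.cast_add_one, add_assoc]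
  have hone : ((1 : Fin (M+4))) = ⟨1, by omega⟩ := rfl
  have hadjsucc : ∀ k : ℕ, (cycleGraph (M+4)).Adj (i + (↑k : Fin (M+4))) (i + (↑(k+1) : Fin (M+4))) := by
    intro k
    rw [hsucc k, hone]
    exact cycAdjSucc (by omega) _
  have hsubcast : ∀ k l : ℕ, k ≤ l → l < (M+4) →
      ((i + (↑l : Fin (M+4))) - (i + (↑k : Fin (M+4)))).val = l - k := by
    intro k l hkl hl
    have h1 : (i + (↑l : Fin (M+4))) - (i + (↑k : Fin (M+4))) = ((↑(l - k) : Fin (M+4))) := by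
      push_cast [Nat.cast_sub hkl]
      ring
    rw [h1, hcast (l - k) (by omega)]
  -- build the arc cycle in H
  refine cycFalse H hch (d + 1) (by omega) (fun k => f (i + (↑k : Fin (M+4)))) ?_ ?_ ?_ ?_
  · intro k hk l hl h
    exact hinj k l (by omega) (by omega) (f.injective h)
  · intro k hk
    have := f.map_rel_iff.mpr (hadjsucc k)
    exact hH'le this
  · beta_reduce
    have h1 : d + 1 - 1 = d := by omega
    rw [h1, hiadd, Nat.cast_zero, add_zero, hfi, hfj]
    exact hadjxy.symm
  · intro k l hkl hl hne0 hadj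
    have hkd : k ≤ d - 2 := by omega
    have hukv : i + (↑k : Fin (M+4)) ≠ i + (↑l : Fin (M+4)) := by
      intro h
      have := hinj k l (by omega) (by omega) h
      omega
    -- not adjacent in the cycle graph
    have hnocyc : ¬(cycleGraph (M+4)).Adj (i + (↑k : Fin (M+4))) (i + (↑l : Fin (M+4))) := by
      rw [cycleGraph_adj']
      push_neg
      constructor
      · -- (u - v).val ≠ 1
        have h2 := hsubcast k l (by omega) (by omega)
        have h3 := sub_val_sum (i + (↑k : Fin (M+4))) (i + (↑l : Fin (M+4))) hukv
        omega
      · have h2 := hsubcast k l (by omega) (by omega)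
        omega
    have hnoH' : ¬H'.Adj (f (i + (↑k : Fin (M+4)))) (f (i + (↑l : Fin (M+4)))) :=
      fun h => hnocyc (f.map_rel_iff.mp h)
    rcases hmiss _ _ hadj hnoH' with ⟨h1, h2⟩ | ⟨h1, h2⟩
    · -- f u = x = f i, f v = y = f j : so k = 0 and l = d
      rw [← hfi] at h1
      rw [← hfj, ← hiadd] at h2
      have hk0 : k = 0 := by
        have := hinj k 0 (by omega) (by omega) (by rw [Nat.cast_zero, add_zero]; exact f.injective h1)
        omega
      have hld : l = d := hinj l d (by omega) (by omega) (f.injective h2)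
      exact hne0 ⟨hk0, hld⟩
    · -- f u = y = f j : k = d, impossible
      rw [← hfj, ← hiadd] at h1
      have : k = d := hinj k d (by omega) (by omega) (f.injective h1)
      omega

lemma c4_extract {H : SimpleGraph V} (hch : IsChordal H) {x y : V} (hadjxy : H.Adj x y)
    (hnch : ¬IsChordal (H.deleteEdges {s(x,y)})) :
    ∃ a b, ¬H.Adj a b ∧ a ≠ b ∧ H.Adj x a ∧ H.Adj a y ∧ H.Adj y b ∧ H.Adj b x ∧
      a ≠ x ∧ a ≠ y ∧ b ≠ x ∧ b ≠ y := by
  set H' := H.deleteEdges {s(x,y)} with hH'def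
  have hH'le : H' ≤ H := by
    intro u v h
    rw [hH'def, deleteEdges_adj] at h
    exact h.1
  have hmiss : ∀ u v, H.Adj u v → ¬H'.Adj u v → (u = x ∧ v = y) ∨ (u = y ∧ v = x) := by
    intro u v hadj hnadj
    rw [hH'def, deleteEdges_adj] at hnadj
    push_neg at hnadj
    have := hnadj hadj
    rw [Set.mem_singleton_iff, Sym2.eq_iff] at this
    exact this
  rw [IsChordal] at hnch
  push_neg at hnch
  obtain ⟨n, hn4, hnemp⟩ := hnch
  obtain ⟨f⟩ := hnemp
  obtain ⟨M, hM⟩ := Nat.exists_eq_add_of_le hn4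
  rw [add_comm] at hM
  subst hM
  -- find the chord endpoints on the cycle
  have hstep1 : ∃ i j : Fin (M+4), f i = x ∧ f j = y ∧ ¬(cycleGraph (M+4)).Adj i j := by
    by_contra hno
    push_neg at hno
    refine (hch (M+4) (by omega)).elim ⟨f.toEmbedding, ?_⟩
    intro a b
    constructor
    · intro hadj
      by_cases hcyc : (cycleGraph (M+4)).Adj a b
      · exact hcyc
      · have hnoH' : ¬H'.Adj (f a) (f b) := fun h => hcyc (f.map_rel_iff.mp h)
        rcases hmiss _ _ hadj hnoH' with ⟨h1, h2⟩ | ⟨h1, h2⟩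
        · exact hno a b h1 h2
        · exact (hno b a h2 h1).symm
    · intro hcyc
      exact hH'le (f.map_rel_iff.mpr hcyc)
  obtain ⟨i, j, hfi, hfj, hij⟩ := hstep1
  have hne : i ≠ j := by
    intro h
    rw [h, hfj] at hfi
    exact hadjxy.ne hfi.symm
  have hd1 : (j - i).val = 2 := arc_crush hch hH'le hadjxy hmiss f hfi hfj hij hne
  have hd2 : (i - j).val = 2 := by
    refine arc_crush hch hH'le hadjxy.symm ?_ f hfj hfi (fun h => hij h.symm) hne.symm
    intro u v hadj hnadj
    rcases hmiss u v hadj hnadj with ⟨h1, h2⟩ | ⟨h1, h2⟩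
    · exact Or.inr ⟨h1, h2⟩
    · exact Or.inl ⟨h1, h2⟩
  have hM0 : M = 0 := by
    have := sub_val_sum i j hne
    omega
  subst hM0
  have hj2 : j = i + 2 := by
    have hF : ∀ i' j' : Fin (0+4), (j' - i').val = 2 → j' = i' + 2 := by decide
    exact hF i j hd1
  have hC1 : (cycleGraph (0+4)).Adj i (i+1) := by
    have hF : ∀ i' : Fin (0+4), (cycleGraph (0+4)).Adj i' (i'+1) := by decide
    exact hF i
  have hC2 : (cycleGraph (0+4)).Adj (i+1) (i+2) := by
    have hF : ∀ i' : Fin (0+4), (cycleGraph (0+4)).Adj (i'+1) (i'+2) := by decide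
    exact hF i
  have hC3 : (cycleGraph (0+4)).Adj (i+2) (i+3) := by
    have hF : ∀ i' : Fin (0+4), (cycleGraph (0+4)).Adj (i'+2) (i'+3) := by decide
    exact hF i
  have hC4 : (cycleGraph (0+4)).Adj (i+3) i := by
    have hF : ∀ i' : Fin (0+4), (cycleGraph (0+4)).Adj (i'+3) i' := by decide
    exact hF i
  have hC5 : ¬(cycleGraph (0+4)).Adj (i+1) (i+3) := by
    have hF : ∀ i' : Fin (0+4), ¬(cycleGraph (0+4)).Adj (i'+1) (i'+3) := by decide
    exact hF i
  have hNE : (i+1) ≠ (i+3) ∧ (i+1) ≠ i ∧ (i+1) ≠ (i+2) ∧ (i+3) ≠ i ∧ (i+3) ≠ (i+2) := by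
    have hF : ∀ i' : Fin (0+4),
        (i'+1) ≠ (i'+3) ∧ (i'+1) ≠ i' ∧ (i'+1) ≠ (i'+2) ∧ (i'+3) ≠ i' ∧ (i'+3) ≠ (i'+2) := by
      decide
    exact hF i
  refine ⟨f (i+1), f (i+3), ?_, ?_, ?_, ?_, ?_, ?_, ?_, ?_, ?_, ?_⟩
  · intro hadj
    have hnoH' : ¬H'.Adj (f (i+1)) (f (i+3)) := fun h => hC5 (f.map_rel_iff.mp h)
    rcases hmiss _ _ hadj hnoH' with ⟨h1, h2⟩ | ⟨h1, h2⟩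
    · rw [← hfi] at h1
      exact hNE.2.1 (f.injective h1)
    · rw [← hfj, hj2] at h1
      exact hNE.2.2.1 (f.injective h1)
  · exact fun h => hNE.1 (f.injective h)
  · rw [← hfi]
    exact hH'le (f.map_rel_iff.mpr hC1)
  · rw [← hfj, hj2]
    exact hH'le (f.map_rel_iff.mpr hC2)
  · rw [← hfj, hj2]
    exact hH'le (f.map_rel_iff.mpr hC3)
  · rw [← hfi]
    exact hH'le (f.map_rel_iff.mpr hC4)
  · intro h
    rw [← hfi] at h
    exact hNE.2.1 (f.injective h)
  · intro h
    rw [← hfj, hj2] at h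
    exact hNE.2.2.1 (f.injective h)
  · intro h
    rw [← hfi] at h
    exact hNE.2.2.2.1 (f.injective h)
  · intro h
    rw [← hfj, hj2] at h
    exact hNE.2.2.2.2 (f.injective h)

lemma reachSet_trans {G : SimpleGraph V} {S : Set V} {a b c : V}
    (hb : b ∈ reachSet G S a) (hc : c ∈ reachSet G S b) : c ∈ reachSet G S a := by
  obtain ⟨h1, h2, r1⟩ := hb
  obtain ⟨h3, h4, r2⟩ := hc
  exact ⟨h1, h4, r1.trans r2⟩

lemma reachSet_eq_of_mem {G : SimpleGraph V} {S : Set V} {a b : V}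
    (hb : b ∈ reachSet G S a) : reachSet G S a = reachSet G S b :=
  Set.ext fun c => ⟨fun h => reachSet_trans (reachSet_symm_mem hb) h,
    fun h => reachSet_trans hb h⟩

lemma reachSet_graph_mono {G H : SimpleGraph V} {S : Set V} {v : V} (hle : G ≤ H) :
    reachSet G S v ⊆ reachSet H S v := by
  rintro w ⟨h1, h2, r⟩
  exact ⟨h1, h2, reachMono hle (le_refl _) h1 h2 r⟩

lemma addCastInj {N : ℕ} [NeZero N] (u : Fin N) {k l : ℕ} (hk : k < N) (hl : l < N)
    (h : u + ↑k = u + ↑l) : k = l := by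
  have h2 := add_left_cancel h
  have h3 := congrArg Fin.val h2
  rwa [natCast_val_eq _ hk, natCast_val_eq _ hl] at h3

lemma addSubValCast {N : ℕ} [NeZero N] (u v : Fin N) : u + ↑((v - u).val) = v := by
  have h1 : ((↑((v - u).val) : Fin N)) = v - u := Fin.ext (by rw [natCast_val_eq _ (v - u).isLt])
  rw [h1]
  abel

lemma cycAdjSuccCast {M : ℕ} (u : Fin (M+4)) (k : ℕ) :
    (cycleGraph (M+4)).Adj (u + ↑k) (u + ↑(k+1)) := by
  have h := cycAdjSucc (N := M+4) (by omega) (u + ↑k)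
  rw [Nat.cast_add_one, ← add_assoc]
  exact h

lemma addCastSubVal {M : ℕ} (u : Fin (M+4)) {k l : ℕ} (hkl : k ≤ l) (hl : l < M+4) :
    ((u + ↑l) - (u + ↑k)).val = l - k := by
  have h1 : (u + (↑l : Fin (M+4))) - (u + ↑k) = ((↑(l - k) : Fin (M+4))) := by
    push_cast [Nat.cast_sub hkl]
    ring
  rw [h1, natCast_val_eq _ (by omega)]

lemma noncycCast {M : ℕ} (u : Fin (M+4)) {k l : ℕ} (hk2 : k + 2 ≤ l) (hl : l ≤ M+3)
    (hdiff : l - k ≤ M+2) : ¬(cycleGraph (M+4)).Adj (u + ↑k) (u + ↑l) := by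
  have hne : u + (↑k : Fin (M+4)) ≠ u + ↑l := fun h => by
    have := addCastInj u (by omega) (by omega) h
    omega
  rw [cycleGraph_adj']
  push_neg
  have hba := addCastSubVal u (show k ≤ l by omega) (show l < M+4 by omega)
  have hs := sub_val_sum (u + (↑k : Fin (M+4))) (u + ↑l) hne
  constructor <;> omega

/-- The "bad pair" relation used in the transfer lemma. -/
def tlBad (G : SimpleGraph V) (S Cu : Set V) (u v : V) : Prop :=
  (u ∈ Cu ∧ v ∈ Cu ∧ v ∉ reachSet G S u) ∨
  (u ∈ Cu ∧ v ∈ S ∧ v ∉ nbhdSet G (reachSet G S u)) ∨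
  (v ∈ Cu ∧ u ∈ S ∧ u ∉ nbhdSet G (reachSet G S v))

/-- The modified triangulation in the transfer lemma. -/
def tlGraph (G H : SimpleGraph V) (S Cu : Set V) : SimpleGraph V where
  Adj u v := H.Adj u v ∧ ¬tlBad G S Cu u v ∧ ¬tlBad G S Cu v u
  symm := ⟨by rintro u v ⟨h1, h2, h3⟩; exact ⟨h1.symm, h3, h2⟩⟩
  loopless := ⟨fun u h => H.irrefl h.1⟩

lemma tlBad_cu {G : SimpleGraph V} {S Cu : Set V} {u v : V} (h : tlBad G S Cu u v) :
    u ∈ Cu ∨ v ∈ Cu := by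
  rcases h with ⟨h1, _, _⟩ | ⟨h1, _, _⟩ | ⟨h1, _, _⟩
  exacts [Or.inl h1, Or.inl h1, Or.inr h1]

lemma tl_G_le {G H : SimpleGraph V} {S Cu : Set V} (hle : G ≤ H) (hCuS : Cu ⊆ Sᶜ) :
    G ≤ tlGraph G H S Cu := by
  intro u v h
  have hGbad : ∀ u' v' : V, G.Adj u' v' → ¬tlBad G S Cu u' v' := by
    intro u' v' h' hb
    rcases hb with ⟨hu, hv, hnr⟩ | ⟨hu, hvS, hnb⟩ | ⟨hv, huS, hnb⟩
    · exact hnr (reachSet_closed (self_mem_reachSet (hCuS hu)) h' (hCuS hv))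
    · exact hnb ⟨fun hc => (reachSet_subset hc) hvS, u', self_mem_reachSet (hCuS hu), h'.symm⟩
    · exact hnb ⟨fun hc => (reachSet_subset hc) huS, v', self_mem_reachSet (hCuS hv), h'⟩
  exact ⟨hle h, hGbad u v h, hGbad v u h.symm⟩

lemma tl_le_H {G H : SimpleGraph V} {S Cu : Set V} : tlGraph G H S Cu ≤ H := fun _ _ h => h.1

lemma tl_chordal {G H : SimpleGraph V} {S Cu : Set V} (hch : IsChordal H)
    (hcomp : IsCompOf H S Cu)
    (hSclique : ∀ u ∈ S, ∀ v ∈ S, u ≠ v → H.Adj u v) : IsChordal (tlGraph G H S Cu) := by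
  intro n hn
  constructor
  intro f
  obtain ⟨M, hM⟩ := Nat.exists_eq_add_of_le hn
  rw [add_comm] at hM
  subst hM
  have hCuS : Cu ⊆ Sᶜ := hcomp.2.1
  have hedge : ∀ a b : Fin (M+4), (cycleGraph (M+4)).Adj a b →
      (tlGraph G H S Cu).Adj (f a) (f b) := fun a b h => f.map_rel_iff.mpr h
  have hnonedge : ∀ a b : Fin (M+4), ¬(cycleGraph (M+4)).Adj a b →
      ¬(tlGraph G H S Cu).Adj (f a) (f b) := fun a b h h2 => h (f.map_rel_iff.mp h2)
  have htrans : (∀ a b : Fin (M+4), a ≠ b → ¬(cycleGraph (M+4)).Adj a b →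
      ¬H.Adj (f a) (f b)) → False := by
    intro hpairs
    refine (hch (M+4) (by omega)).elim ⟨f.toEmbedding, ?_⟩
    intro a b
    constructor
    · intro hadj
      by_contra hcyc
      have hab : a ≠ b := by rintro rfl; exact H.irrefl hadj
      exact hpairs a b hab hcyc hadj
    · intro hcyc
      exact (f.map_rel_iff.mpr hcyc).1
  by_cases hallout : ∀ k : Fin (M+4), f k ∉ Cu
  · refine htrans ?_
    intro a b hab hncyc hadjH
    refine hnonedge a b hncyc ⟨hadjH, ?_, ?_⟩
    · intro hb
      rcases tlBad_cu hb with h | h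
      exacts [hallout a h, hallout b h]
    · intro hb
      rcases tlBad_cu hb with h | h
      exacts [hallout b h, hallout a h]
  by_cases hallin : ∀ k : Fin (M+4), f k ∈ Cu
  · have hstep : ∀ k : Fin (M+4), f (k + 1) ∈ reachSet G S (f k) := by
      intro k
      have he := hedge k (k + 1) (by
        have h := cycAdjSucc (N := M+4) (by omega) k
        exact h)
      obtain ⟨h1, h2, h3⟩ := he
      by_contra hr
      exact h2 (Or.inl ⟨hallin k, hallin (k+1), hr⟩)
    set x0 : Fin (M+4) := ⟨0, by omega⟩ with hx0
    have hchain : ∀ m : ℕ, f (x0 + ↑m) ∈ reachSet G S (f x0) := by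
      intro m
      induction m with
      | zero =>
        rw [Nat.cast_zero, add_zero]
        exact self_mem_reachSet (hCuS (hallin x0))
      | succ m ihm =>
        have hidx : x0 + ((m+1 : ℕ) : Fin (M+4)) = (x0 + ↑m) + 1 := by push_cast; ring
        rw [hidx]
        exact reachSet_trans ihm (hstep (x0 + ↑m))
    have hall2 : ∀ k : Fin (M+4), f k ∈ reachSet G S (f x0) := by
      intro k
      have := hchain ((k - x0).val)
      rwa [addSubValCast] at this
    refine htrans ?_
    intro a b hab hncyc hadjH
    have hnbad : ∀ a' b' : Fin (M+4), ¬tlBad G S Cu (f a') (f b') := by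
      intro a' b' hb
      rcases hb with ⟨_, _, hr⟩ | ⟨_, hbS, _⟩ | ⟨_, haS, _⟩
      · exact hr (reachSet_trans (reachSet_symm_mem (hall2 a')) (hall2 b'))
      · exact (hCuS (hallin b')) hbS
      · exact (hCuS (hallin a')) haS
    exact hnonedge a b hncyc ⟨hadjH, hnbad a b, hnbad b a⟩
  · push_neg at hallin hallout
    obtain ⟨iOut, hOut⟩ := hallin
    obtain ⟨iIn, hIn⟩ := hallout
    obtain ⟨m0, hm0P, hm0min⟩ := exists_least (P := fun m => f (iOut + ↑m) ∈ Cu)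
      ⟨(iIn - iOut).val, by show f (iOut + ↑((iIn - iOut).val)) ∈ Cu; rw [addSubValCast]; exact hIn⟩
    have hm0pos : 1 ≤ m0 := by
      rcases Nat.eq_zero_or_pos m0 with rfl | h
      · rw [Nat.cast_zero, add_zero] at hm0P
        exact absurd hm0P hOut
      · exact h
    have hm0lt : m0 < M + 4 := by
      by_contra hcon
      exact hm0min ((iIn - iOut).val) (by have := (iIn - iOut).isLt; omega)
        (by show f (iOut + ↑((iIn - iOut).val)) ∈ Cu; rw [addSubValCast]; exact hIn)
    set j0 : Fin (M+4) := iOut + ↑m0 with hj0def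
    have hj0 : f j0 ∈ Cu := hm0P
    have hpred : f (j0 + ↑(M+3)) ∉ Cu := by
      have hidx : j0 + (↑(M+3) : Fin (M+4)) = iOut + ↑(m0 - 1) := by
        rw [hj0def, add_assoc, ← Nat.cast_add,
          show m0 + (M+3) = (m0 - 1) + (M+4) by omega, Nat.cast_add, Fin.natCast_self, add_zero]
      rw [hidx]
      exact fun hc => hm0min (m0 - 1) (by omega) hc
    have hj0Out : j0 ≠ iOut := by
      intro h
      rw [h] at hj0
      exact hOut hj0
    obtain ⟨r, ⟨hr1, hrP⟩, hrmin⟩ := exists_least (P := fun o => 1 ≤ o ∧ f (j0 + ↑o) ∉ Cu)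
      ⟨(iOut - j0).val, Nat.one_le_iff_ne_zero.mpr (sub_val_ne_zero hj0Out),
        by show f (j0 + ↑((iOut - j0).val)) ∉ Cu; rw [addSubValCast]; exact hOut⟩
    have hrlt : r ≤ M + 3 := by
      by_contra hcon
      exact hrmin ((iOut - j0).val) (by have := (iOut - j0).isLt; omega)
        ⟨Nat.one_le_iff_ne_zero.mpr (sub_val_ne_zero hj0Out),
          by show f (j0 + ↑((iOut - j0).val)) ∉ Cu; rw [addSubValCast]; exact hOut⟩
    have harc : ∀ o, o < r → f (j0 + ↑o) ∈ Cu := by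
      intro o ho
      rcases Nat.eq_zero_or_pos o with rfl | hop
      · rw [Nat.cast_zero, add_zero]
        exact hj0
      · by_contra hc
        exact hrmin o ho ⟨hop, hc⟩
    have hDstep : ∀ o, o + 1 < r → f (j0 + ↑(o+1)) ∈ reachSet G S (f (j0 + ↑o)) := by
      intro o ho
      have he := hedge _ _ (cycAdjSuccCast j0 o)
      obtain ⟨h1, h2, h3⟩ := he
      by_contra hr'
      exact h2 (Or.inl ⟨harc o (by omega), harc (o+1) ho, hr'⟩)
    have hDchain : ∀ o, o < r → f (j0 + ↑o) ∈ reachSet G S (f j0) := by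
      intro o
      induction o with
      | zero =>
        intro _
        rw [Nat.cast_zero, add_zero]
        exact self_mem_reachSet (hCuS hj0)
      | succ m ihm =>
        intro ho
        exact reachSet_trans (ihm (by omega)) (hDstep m ho)
    have hs1S : f (j0 + ↑r) ∈ S := by
      have he := hedge _ _ (cycAdjSuccCast j0 (r-1))
      rw [show r - 1 + 1 = r by omega] at he
      by_contra hs
      exact hrP (hcomp.2.2.2 _ (harc (r-1) (by omega)) _ hs he.1)
    have hs1nb : f (j0 + ↑r) ∈ nbhdSet G (reachSet G S (f j0)) := by
      have he := hedge _ _ (cycAdjSuccCast j0 (r-1))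
      rw [show r - 1 + 1 = r by omega] at he
      obtain ⟨h1, h2, h3⟩ := he
      by_contra hnb
      refine h2 (Or.inr (Or.inl ⟨harc (r-1) (by omega), hs1S, ?_⟩))
      rwa [← reachSet_eq_of_mem (hDchain (r-1) (by omega))]
    have finish : (∀ k : Fin (M+4), f k ∈ reachSet G S (f j0) ∨
        (f k ∈ S ∧ f k ∈ nbhdSet G (reachSet G S (f j0)))) → False := by
      intro hmem
      refine htrans ?_
      intro a b hab hncyc hadjH
      have hnb : ∀ a' b' : Fin (M+4), ¬tlBad G S Cu (f a') (f b') := by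
        intro a' b' hb
        rcases hb with ⟨huCu, hvCu, hr'⟩ | ⟨huCu, hvS, hnb'⟩ | ⟨hvCu, huS, hnb'⟩
        · rcases hmem a' with hu | ⟨huS, _⟩
          · rcases hmem b' with hv | ⟨hvS, _⟩
            · exact hr' (reachSet_trans (reachSet_symm_mem hu) hv)
            · exact (hCuS hvCu) hvS
          · exact (hCuS huCu) huS
        · rcases hmem b' with hv | ⟨hvS', hvnb⟩
          · exact (reachSet_subset hv) hvS
          · rcases hmem a' with hu | ⟨huS, _⟩
            · exact hnb' (by rwa [← reachSet_eq_of_mem hu])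
            · exact (hCuS huCu) huS
        · rcases hmem a' with hu | ⟨huS', hunb⟩
          · exact (reachSet_subset hu) huS
          · rcases hmem b' with hv | ⟨hvS, _⟩
            · exact hnb' (by rwa [← reachSet_eq_of_mem hv])
            · exact (hCuS hvCu) hvS
      exact hnonedge a b hncyc ⟨hadjH, hnb a b, hnb b a⟩
    by_cases hr2 : r = M + 3
    · subst hr2
      refine finish ?_
      intro k
      have hk := addSubValCast j0 k
      have hlt := (k - j0).isLt
      rcases Nat.lt_or_ge ((k - j0).val) (M+3) with h | h
      · left
        have := hDchain _ h
        rwa [hk] at this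
      · right
        have he : (k - j0).val = M + 3 := by omega
        rw [← hk, he]
        exact ⟨hs1S, hs1nb⟩
    · have hadj23 : (cycleGraph (M+4)).Adj (j0 + ↑(M+3)) j0 := by
        have h := cycAdjSuccCast j0 (M+3)
        rwa [show ((M+3+1 : ℕ) : Fin (M+4)) = (0 : Fin (M+4)) from Fin.natCast_self (M+4),
          add_zero] at h
      have hs2S : f (j0 + ↑(M+3)) ∈ S := by
        by_contra hs
        exact hpred (hcomp.2.2.2 _ hj0 _ hs (hedge _ _ hadj23).1.symm)
      have hs2nb : f (j0 + ↑(M+3)) ∈ nbhdSet G (reachSet G S (f j0)) := by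
        obtain ⟨h1, h2, h3⟩ := hedge _ _ hadj23
        by_contra hnb
        exact h2 (Or.inr (Or.inr ⟨hj0, hs2S, hnb⟩))
      by_cases hradj : r = M + 2
      · subst hradj
        refine finish ?_
        intro k
        have hk := addSubValCast j0 k
        have hlt := (k - j0).isLt
        rcases Nat.lt_or_ge ((k - j0).val) (M+2) with h | h
        · left
          have := hDchain _ h
          rwa [hk] at this
        · rcases Nat.eq_or_lt_of_le h with he | h2
          · right
            rw [← hk, ← he]
            exact ⟨hs1S, hs1nb⟩
          · right
            have he : (k - j0).val = M + 3 := by omega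
            rw [← hk, he]
            exact ⟨hs2S, hs2nb⟩
      · have hncyc12 : ¬(cycleGraph (M+4)).Adj (j0 + ↑r) (j0 + ↑(M+3)) :=
          noncycCast j0 (by omega) (by omega) (by omega)
        have hs12ne : f (j0 + ↑r) ≠ f (j0 + ↑(M+3)) := by
          intro h
          have := addCastInj j0 (show r < M+4 by omega) (show M+3 < M+4 by omega) (f.injective h)
          omega
        refine hnonedge _ _ hncyc12 ⟨hSclique _ hs1S _ hs2S hs12ne, ?_, ?_⟩
        · intro hb
          rcases hb with ⟨h1, _, _⟩ | ⟨h1, _, _⟩ | ⟨h1, _, _⟩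
          exacts [(hCuS h1) hs1S, (hCuS h1) hs1S, (hCuS h1) hs2S]
        · intro hb
          rcases hb with ⟨h1, _, _⟩ | ⟨h1, _, _⟩ | ⟨h1, _, _⟩
          exacts [(hCuS h1) hs2S, (hCuS h1) hs2S, (hCuS h1) hs1S]

lemma transfer {G H : SimpleGraph V} (hch : IsChordal H) (hle : G ≤ H)
    (hmin : ∀ H'', G ≤ H'' → H'' ≤ H → IsChordal H'' → H'' = H)
    {S Cu : Set V} (hcomp : IsCompOf H S Cu) (hfull : ∀ s ∈ S, s ∈ nbhdSet H Cu)
    (hSclique : ∀ u ∈ S, ∀ v ∈ S, u ≠ v → H.Adj u v) :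
    ∃ D, D ⊆ Cu ∧ IsCompOf G S D ∧ nbhdSet G D = S := by
  have hCuS : Cu ⊆ Sᶜ := hcomp.2.1
  have heq := hmin (tlGraph G H S Cu) (tl_G_le hle hCuS) tl_le_H
    (tl_chordal hch hcomp hSclique)
  have keyH : ∀ u v : V, H.Adj u v → ¬tlBad G S Cu u v := by
    intro u v h
    have h2 : (tlGraph G H S Cu).Adj u v := by rw [heq]; exact h
    exact h2.2.1
  obtain ⟨c0, hc0⟩ := hcomp.1
  have hc0S : c0 ∉ S := hCuS hc0
  refine ⟨reachSet G S c0, ?_, isCompOf_reachSet hc0S, ?_⟩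
  · -- contained in Cu
    intro w hw
    have hw2 : w ∈ reachSet H S c0 := reachSet_graph_mono hle hw
    have := hcomp.eq_reachSet hc0
    rw [this]
    exact hw2
  · -- neighborhood is S
    have claim1 : ∀ c ∈ Cu, c ∈ reachSet G S c0 := by
      intro c hcCu
      have hr : (H.induce Cu).Reachable ⟨c0, hc0⟩ ⟨c, hcCu⟩ := hcomp.2.2.1.preconnected _ _
      obtain ⟨p⟩ := hr
      have walkclaim : ∀ (a b : (Cu : Set V)) (_ : (H.induce Cu).Walk a b),
          (a : V) ∈ reachSet G S c0 → (b : V) ∈ reachSet G S c0 := by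
        intro a b q
        induction q with
        | nil => exact id
        | @cons a' u' b' hadj q ih =>
          intro ha
          have hadj' : H.Adj (a' : V) (u' : V) := indAdj.mp hadj
          have hnbad := keyH _ _ hadj'
          have : (u' : V) ∈ reachSet G S (a' : V) := by
            by_contra hr'
            exact hnbad (Or.inl ⟨a'.2, u'.2, hr'⟩)
          exact ih (reachSet_trans ha this)
      exact walkclaim _ _ p (self_mem_reachSet hc0S)
    refine Set.eq_of_subset_of_subset (comp_nbhd_subset (isCompOf_reachSet hc0S)) ?_
    intro s hs
    obtain ⟨hsCu, c, hcCu, hadj⟩ := hfull s hs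
    have hnbad := keyH s c hadj
    have hsnb : s ∈ nbhdSet G (reachSet G S c) := by
      by_contra hnb
      exact hnbad (Or.inr (Or.inr ⟨hcCu, hs, hnb⟩))
    rwa [reachSet_eq_of_mem (claim1 c hcCu)]

lemma necessity2 [Fintype V] {G H : SimpleGraph V} {Ω : Set V} (hle : G ≤ H)
    (hch : IsChordal H) (hmin : ∀ H'', G ≤ H'' → H'' ≤ H → IsChordal H'' → H'' = H)
    (hmax : IsMaxClique H Ω) :
    ∀ x ∈ Ω, ∀ y ∈ Ω, x ≠ y → G.Adj x y ∨
      ∃ D, IsCompOf G Ω D ∧ x ∈ nbhdSet G D ∧ y ∈ nbhdSet G D := by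
  intro x hx y hy hne
  by_cases hG : G.Adj x y
  · exact Or.inl hG
  right
  have hH : H.Adj x y := hmax.1 hx hy hne
  have hnch : ¬IsChordal (H.deleteEdges {s(x,y)}) := by
    intro hch'
    have hle' : G ≤ H.deleteEdges {s(x,y)} := by
      intro u v h
      rw [deleteEdges_adj]
      refine ⟨hle h, ?_⟩
      rw [Set.mem_singleton_iff, Sym2.eq_iff]
      rintro (⟨rfl, rfl⟩ | ⟨rfl, rfl⟩)
      · exact hG h
      · exact hG h.symm
    have hle2 : H.deleteEdges {s(x,y)} ≤ H := fun u v h => (deleteEdges_adj.mp h).1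
    have heq := hmin _ hle' hle2 hch'
    have h2 : (H.deleteEdges {s(x,y)}).Adj x y := by rw [heq]; exact hH
    rw [deleteEdges_adj] at h2
    exact h2.2 (Set.mem_singleton _)
  obtain ⟨a, b, hnab, hab, hxa, hay, hyb, hbx, hax, hay', hbx', hby'⟩ := c4_extract hch hH hnch
  have hsep0 : SepIn H {v | H.Adj a v} a b := sepIn_nbhd hab hnab
  obtain ⟨S, hSsub, hsep, hminS⟩ := sep_minimal hsep0
  have hcommon : ∀ z, H.Adj a z → H.Adj z b → z ∈ S := by
    intro z h1 h2
    by_contra hz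
    exact hsep.2.2 ⟨hsep.1, hsep.2.1,
      (Adj.reachable ((indAdj (a := ⟨a, hsep.1⟩) (b := ⟨z, hz⟩)).mpr h1)).trans
        (Adj.reachable ((indAdj (a := ⟨z, hz⟩) (b := ⟨b, hsep.2.1⟩)).mpr h2))⟩
  have hxS : x ∈ S := hcommon x hxa.symm hbx.symm
  have hyS : y ∈ S := hcommon y hay hyb
  have haS : a ∉ S := hsep.1
  have hbS : b ∉ S := hsep.2.1
  have hCa : IsCompOf H S (reachSet H S a) := isCompOf_reachSet haS
  have hCb : IsCompOf H S (reachSet H S b) := isCompOf_reachSet hbS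
  have hminb : ∀ Y ⊆ S, SepIn H Y b a → Y = S := fun Y h1 h2 => hminS Y h1 h2.symm
  have hSclique : ∀ u ∈ S, ∀ v ∈ S, u ≠ v → H.Adj u v := sep_clique hch hsep hminS
  have hfulla : ∀ s ∈ S, s ∈ nbhdSet H (reachSet H S a) := sep_full hsep hminS
  have hfullb : ∀ s ∈ S, s ∈ nbhdSet H (reachSet H S b) := sep_full hsep.symm hminb
  have hside : (∀ w ∈ Ω, w ∉ reachSet H S a) ∨ (∀ w ∈ Ω, w ∉ reachSet H S b) := by
    by_contra hcon
    push_neg at hcon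
    obtain ⟨⟨w1, hw1, hw1a⟩, ⟨w2, hw2, hw2b⟩⟩ := hcon
    have hne12 : w1 ≠ w2 := fun h => sep_sides_disjoint hsep w1 hw1a (h ▸ hw2b)
    exact sep_sides_noAdj hsep w1 hw1a w2 hw2b (hmax.1 hw1 hw2 hne12)
  obtain ⟨D', hD'out, hD'comp, hD'nb⟩ :
      ∃ D', (∀ w ∈ Ω, w ∉ D') ∧ IsCompOf G S D' ∧ nbhdSet G D' = S := by
    rcases hside with h | h
    · obtain ⟨D', h1, h2, h3⟩ := transfer hch hle hmin hCa hfulla hSclique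
      exact ⟨D', fun w hw hwD => h w hw (h1 hwD), h2, h3⟩
    · obtain ⟨D', h1, h2, h3⟩ := transfer hch hle hmin hCb hfullb hSclique
      exact ⟨D', fun w hw hwD => h w hw (h1 hwD), h2, h3⟩
  obtain ⟨d0, hd0⟩ := hD'comp.1
  have hd0Ω : d0 ∉ Ω := fun h => hD'out d0 h hd0
  have hD'Ω : D' ⊆ (Ωᶜ : Set V) := fun w hw hΩ => hD'out w hΩ hw
  have hsubset : D' ⊆ reachSet G Ω d0 := by
    intro w hw
    exact ⟨hd0Ω, hD'Ω hw, reachMono (le_refl G) hD'Ω hd0 hw (hD'comp.2.2.1.preconnected _ _)⟩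
  refine ⟨reachSet G Ω d0, isCompOf_reachSet hd0Ω, ?_, ?_⟩
  · have hxnb : x ∈ nbhdSet G D' := by rw [hD'nb]; exact hxS
    obtain ⟨_, d, hd, hadj⟩ := hxnb
    exact ⟨fun hc => (reachSet_subset hc) hx, d, hsubset hd, hadj⟩
  · have hynb : y ∈ nbhdSet G D' := by rw [hD'nb]; exact hyS
    obtain ⟨_, d, hd, hadj⟩ := hynb
    exact ⟨fun hc => (reachSet_subset hc) hy, d, hsubset hd, hadj⟩

theorem stmt11 [Fintype V] (G : SimpleGraph V) (Ω : Set V) :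
    IsPMC G Ω ↔
      ((∀ D, IsCompOf G Ω D → nbhdSet G D ⊂ Ω) ∧
       (∀ x ∈ Ω, ∀ y ∈ Ω, x ≠ y →
         G.Adj x y ∨ ∃ D, IsCompOf G Ω D ∧ x ∈ nbhdSet G D ∧ y ∈ nbhdSet G D)) := by
  constructor
  · rintro ⟨H, hle, hch, hmin, hmax⟩
    exact ⟨necessity1 hle hch hmax, necessity2 hle hch hmin hmax⟩
  · rintro ⟨h1, h2⟩
    exact sufficiency G Ω h1 h2
end

section
/- Let G be a long-hole-free graph, Ω a potential maximal clique in G, and v ∈ Ω. Then either Ω ⊆ N[v] or there exists a connected component D of G − Ω with Ω \ N(v) ⊆ N(D) (and in particular v ∈ N(D)). -/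
open SimpleGraph

variable {V : Type*}

section Aux
variable {V : Type*}

/-- A walk from `x` to `y` of length `m`, given as a function `ℕ → V`. -/
def FW (G : SimpleGraph V) (x y : V) (m : ℕ) (f : ℕ → V) : Prop :=
  f 0 = x ∧ f m = y ∧ ∀ i < m, G.Adj (f i) (f (i + 1))

/-- No chords: non-consecutive vertices (within `[0,m]`) are non-adjacent. -/
def FWChordless (G : SimpleGraph V) (m : ℕ) (f : ℕ → V) : Prop :=
  ∀ i j, i + 1 < j → j ≤ m → ¬ G.Adj (f i) (f j)

def FWInj (m : ℕ) (f : ℕ → V) : Prop :=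
  ∀ i, i ≤ m → ∀ j, j ≤ m → f i = f j → i = j

lemma fw_concat {G : SimpleGraph V} {x y z : V} {m1 m2 : ℕ} {f1 f2 : ℕ → V}
    (h1 : FW G x y m1 f1) (h2 : FW G y z m2 f2) :
    FW G x z (m1 + m2) (fun t => if t ≤ m1 then f1 t else f2 (t - m1)) := by
  obtain ⟨ha1, hb1, hc1⟩ := h1
  obtain ⟨ha2, hb2, hc2⟩ := h2
  refine ⟨by simp [ha1], ?_, ?_⟩
  · by_cases h : m2 = 0
    · subst h; simpa [hb1, ha2.symm, hb2] using hb2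
    · have : ¬ (m1 + m2 ≤ m1) := by omega
      simp only [this, if_false]
      simpa using hb2
  · intro i hi
    by_cases h : i + 1 ≤ m1
    · have : i ≤ m1 := by omega
      simp only [this, h, if_true]
      exact hc1 i (by omega)
    · by_cases h' : i ≤ m1
      · have hieq : i = m1 := by omega
        simp only [h', h, if_true, if_false]
        subst hieq
        have : f2 (i + 1 - i) = f2 1 := by congr 1; omega
        rw [this, hb1, ← ha2]
        exact hc2 0 (by omega)
      · simp only [h', h, if_false]
        have : i + 1 - m1 = (i - m1) + 1 := by omega
        rw [this]
        exact hc2 (i - m1) (by omega)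

lemma fw_concat_range {m1 m2 : ℕ} {f1 f2 : ℕ → V} {U : Set V}
    (r1 : ∀ i ≤ m1, f1 i ∈ U) (r2 : ∀ i ≤ m2, f2 i ∈ U) :
    ∀ i ≤ m1 + m2, (fun t => if t ≤ m1 then f1 t else f2 (t - m1)) i ∈ U := by
  intro i hi
  by_cases h : i ≤ m1
  · simpa [h] using r1 i h
  · simpa [h] using r2 (i - m1) (by omega)

/-- From any walk with range in `U`, extract a chordless injective walk with range in `U`. -/
lemma exists_good_fw {G : SimpleGraph V} {U : Set V} {x y : V} :
    ∀ m : ℕ, ∀ f : ℕ → V, FW G x y m f → (∀ i ≤ m, f i ∈ U) →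
    ∃ m' f', FW G x y m' f' ∧ (∀ i ≤ m', f' i ∈ U) ∧ FWChordless G m' f' ∧ FWInj m' f'
      ∧ m' ≤ m := by
  intro m
  induction m using Nat.strong_induction_on with
  | _ m IH =>
    intro f hfw hU
    by_cases hinj : FWInj m f
    · by_cases hch : FWChordless G m f
      · exact ⟨m, f, hfw, hU, hch, hinj, le_rfl⟩
      · -- there is a chord (i,j), i+1 < j ≤ m; splice it
        unfold FWChordless at hch; push_neg at hch
        obtain ⟨i, j, hij, hjm, hadj⟩ := hch
        obtain ⟨ha, hb, hc⟩ := hfw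
        set c := j - i - 1 with hc_def
        have hc1 : 1 ≤ c := by omega
        set m' := m - c with hm'_def
        have hm'lt : m' < m := by omega
        set g : ℕ → V := fun t => if t ≤ i then f t else f (t + c) with hg
        have hgfw : FW G x y m' g := by
          refine ⟨by simp [hg, ha], ?_, ?_⟩
          · have h1 : ¬ (m' ≤ i) := by omega
            have h2 : m' + c = m := by omega
            simp only [hg, h1, if_false, h2, hb]
          · intro t ht
            by_cases h : t + 1 ≤ i
            · simp only [hg, h, (by omega : t ≤ i), if_true]
              exact hc t (by omega)
            · by_cases h' : t ≤ i
              · have : t = i := by omega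
                subst this
                simp only [hg, h, h', if_true, if_false]
                have : t + 1 + c = j := by omega
                rw [this]; exact hadj
              · simp only [hg, h, h', if_false]
                have : t + 1 + c = (t + c) + 1 := by omega
                rw [this]
                exact hc (t + c) (by omega)
        have hgU : ∀ t ≤ m', g t ∈ U := by
          intro t ht
          by_cases h : t ≤ i
          · simpa [hg, h] using hU t (by omega)
          · simpa [hg, h] using hU (t + c) (by omega)
        obtain ⟨m'', f'', p1, p2, p3, p4, p5⟩ := IH m' hm'lt g hgfw hgU
        exact ⟨m'', f'', p1, p2, p3, p4, by omega⟩
    · -- duplicate vertices: shorten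
      unfold FWInj at hinj; push_neg at hinj
      obtain ⟨i, him, j, hjm, heq, hne⟩ := hinj
      -- wlog i < j
      obtain ⟨i, j, him, hjm, heq, hlt⟩ : ∃ i j, i ≤ m ∧ j ≤ m ∧ f i = f j ∧ i < j := by
        rcases Nat.lt_or_ge i j with h | h
        · exact ⟨i, j, him, hjm, heq, h⟩
        · exact ⟨j, i, hjm, him, heq.symm, by omega⟩
      obtain ⟨ha, hb, hc⟩ := hfw
      set c := j - i with hc_def
      set m' := m - c with hm'_def
      have hm'lt : m' < m := by omega
      set g : ℕ → V := fun t => if t ≤ i then f t else f (t + c) with hg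
      have hgfw : FW G x y m' g := by
        refine ⟨by simp [hg, ha], ?_, ?_⟩
        · by_cases h1 : m' ≤ i
          · have hmi : m' = i := by omega
            have hjm' : j = m := by omega
            show g m' = y
            rw [hg]
            simp only [h1, if_true]
            rw [hmi, heq, hjm', hb]
          · have h2 : m' + c = m := by omega
            simp only [hg, h1, if_false, h2, hb]
        · intro t ht
          by_cases h : t + 1 ≤ i
          · simp only [hg, h, (by omega : t ≤ i), if_true]
            exact hc t (by omega)
          · by_cases h' : t ≤ i
            · have : t = i := by omega
              subst this
              simp only [hg, h, h', if_true, if_false]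
              have : t + 1 + c = j + 1 := by omega
              rw [this, heq]
              exact hc j (by omega)
            · simp only [hg, h, h', if_false]
              have : t + 1 + c = (t + c) + 1 := by omega
              rw [this]
              exact hc (t + c) (by omega)
      have hgU : ∀ t ≤ m', g t ∈ U := by
        intro t ht
        by_cases h : t ≤ i
        · simpa [hg, h] using hU t (by omega)
        · simpa [hg, h] using hU (t + c) (by omega)
      obtain ⟨m'', f'', p1, p2, p3, p4, p5⟩ := IH m' hm'lt g hgfw hgU
      exact ⟨m'', f'', p1, p2, p3, p4, by omega⟩

section Comp

variable (G : SimpleGraph V) (Ω : Set V)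

/-- connected via a walk avoiding `Ω`. -/
def inComp (u w : V) : Prop :=
  ∃ m f, FW G u w m f ∧ ∀ i ≤ m, f i ∉ Ω

def compOf (u : V) : Set V := {w | inComp G Ω u w}

variable {G Ω}

lemma inComp.refl {u : V} (hu : u ∉ Ω) : inComp G Ω u u :=
  ⟨0, fun _ => u, ⟨rfl, rfl, by omega⟩, fun i hi => by simpa using hu⟩

lemma inComp.symm {u w : V} (h : inComp G Ω u w) : inComp G Ω w u := by
  obtain ⟨m, f, ⟨ha, hb, hc⟩, hr⟩ := h
  refine ⟨m, fun t => f (m - t), ⟨by simp [hb], by simp [ha], ?_⟩, ?_⟩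
  · intro i hi
    have h1 : m - i = (m - (i+1)) + 1 := by omega
    have := hc (m - (i + 1)) (by omega)
    rw [← h1] at this
    exact this.symm
  · intro i hi
    exact hr (m - i) (by omega)

lemma inComp.trans {u w z : V} (h1 : inComp G Ω u w) (h2 : inComp G Ω w z) :
    inComp G Ω u z := by
  obtain ⟨m1, f1, hfw1, hr1⟩ := h1
  obtain ⟨m2, f2, hfw2, hr2⟩ := h2
  refine ⟨m1 + m2, _, fw_concat hfw1 hfw2, ?_⟩
  intro i hi
  exact fw_concat_range (U := Ωᶜ) hr1 hr2 i hi

lemma inComp.notMem {u w : V} (h : inComp G Ω u w) : w ∉ Ω := by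
  obtain ⟨m, f, ⟨ha, hb, hc⟩, hr⟩ := h
  rw [← hb]; exact hr m le_rfl

lemma inComp.notMem' {u w : V} (h : inComp G Ω u w) : u ∉ Ω := h.symm.notMem

lemma inComp.adj {u w z : V} (h : inComp G Ω u w) (hadj : G.Adj w z) (hz : z ∉ Ω) :
    inComp G Ω u z := by
  refine h.trans ⟨1, fun t => if t = 0 then w else z, ⟨by simp, by simp, ?_⟩, ?_⟩
  · intro i hi
    have : i = 0 := by omega
    simp [this, hadj]
  · intro i hi
    interval_cases i <;> simp [h.notMem, hz]

lemma mem_compOf_self {u : V} (hu : u ∉ Ω) : u ∈ compOf G Ω u := inComp.refl hu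

lemma compOf_subset {u : V} : compOf G Ω u ⊆ Ωᶜ := fun _ h => h.notMem

lemma compOf_eq_of_mem {u w : V} (h : w ∈ compOf G Ω u) : compOf G Ω u = compOf G Ω w := by
  ext z
  exact ⟨fun hz => (inComp.symm h).trans hz, fun hz => inComp.trans h hz⟩

/-- all vertices of a witnessing walk are in the component. -/
lemma fw_mem_compOf {u w : V} {m : ℕ} {f : ℕ → V} (hfw : FW G u w m f)
    (hr : ∀ i ≤ m, f i ∉ Ω) : ∀ i ≤ m, f i ∈ compOf G Ω u := by
  intro i hi
  exact ⟨i, f, ⟨hfw.1, rfl, fun t ht => hfw.2.2 t (by omega)⟩, fun t ht => hr t (by omega)⟩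

/-- a walk whose vertices lie in `S` gives reachability in `G.induce S`. -/
lemma fw_reachable {S : Set V} :
    ∀ (m : ℕ) (f : ℕ → V) (x y : V), FW G x y m f → (∀ i ≤ m, f i ∈ S) →
      ∀ (hx : x ∈ S) (hy : y ∈ S),
      (G.induce S).Reachable ⟨x, hx⟩ ⟨y, hy⟩ := by
  intro m
  induction m with
  | zero =>
    intro f x y hfw _ hx hy
    have : x = y := by rw [← hfw.1, ← hfw.2.1]
    subst this
    rfl
  | succ k IH =>
    intro f x y hfw hr hx hy
    have h1 : f 1 ∈ S := hr 1 (by omega)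
    have hadj : (G.induce S).Adj ⟨x, hx⟩ ⟨f 1, h1⟩ := by
      simp only [comap_adj, Function.Embedding.coe_subtype]
      rw [← hfw.1]
      exact hfw.2.2 0 (by omega)
    refine (Reachable.trans hadj.reachable
      (IH (fun t => f (t + 1)) (f 1) y ⟨rfl, ?_, ?_⟩ ?_ h1 hy))
    · simpa using hfw.2.1
    · intro i hi
      exact hfw.2.2 (i + 1) (by omega)
    · intro i hi
      exact hr (i + 1) (by omega)

lemma compOf_isCompOf {u : V} (hu : u ∉ Ω) : IsCompOf G Ω (compOf G Ω u) := by
  refine ⟨⟨u, mem_compOf_self hu⟩, compOf_subset, ?_, ?_⟩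
  · rw [connected_iff]
    refine ⟨?_, ⟨⟨u, mem_compOf_self hu⟩⟩⟩
    rintro ⟨a, ha⟩ ⟨b, hb⟩
    have hab : inComp G Ω a b := (inComp.symm ha).trans hb
    obtain ⟨m, f, hfw, hr⟩ := hab
    exact fw_reachable m f a b hfw
      (fun i hi => by exact inComp.trans ha (fw_mem_compOf hfw hr i hi)) ha hb
  · rintro w hw z hz hadj
    exact hw.adj hadj hz

/-- conversely, reachability in an induced subgraph gives a walk. -/
lemma reachable_fw {S : Set V} {a b : ↥S} (h : (G.induce S).Reachable a b) :
    ∃ m f, FW G (a : V) (b : V) m f ∧ ∀ i ≤ m, f i ∈ S := by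
  obtain ⟨p⟩ := h
  induction p with
  | @nil c => exact ⟨0, fun _ => (c : V), ⟨rfl, rfl, by omega⟩, fun i hi => c.2⟩
  | @cons c d e hadj p IH =>
    obtain ⟨m, f, hfw, hr⟩ := IH
    have hadj' : G.Adj (c : V) (d : V) := by
      simpa [comap_adj] using hadj
    refine ⟨m + 1, fun t => if t = 0 then (c : V) else f (t - 1), ⟨by simp, ?_, ?_⟩, ?_⟩
    · simp only [Nat.add_one_ne_zero, if_false]
      simpa using hfw.2.1
    · intro i hi
      rcases Nat.eq_zero_or_pos i with h0 | h0
      · subst h0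
        simpa [hfw.1] using hadj'
      · have h1 : ¬ (i = 0) := by omega
        have h2 : ¬ (i + 1 = 0) := by omega
        simp only [h1, h2, if_false]
        have heqn : i - 1 + 1 = i + 1 - 1 := by omega
        have h3 := hfw.2.2 (i - 1) (by omega)
        rwa [heqn] at h3
    · intro i hi
      rcases Nat.eq_zero_or_pos i with h0 | h0
      · subst h0; simpa using c.2
      · have h1 : ¬ (i = 0) := by omega
        simp only [h1, if_false]
        exact hr (i - 1) (by omega)

lemma isCompOf_eq_compOf {D : Set V} (hD : IsCompOf G Ω D) {u : V} (hu : u ∈ D) :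
    D = compOf G Ω u := by
  obtain ⟨hne, hsub, hconn, hclose⟩ := hD
  ext w
  constructor
  · intro hw
    obtain ⟨m, f, hfw, hr⟩ := reachable_fw (hconn.preconnected ⟨u, hu⟩ ⟨w, hw⟩)
    exact ⟨m, f, hfw, fun i hi => hsub (hr i hi)⟩
  · rintro ⟨m, f, hfw, hr⟩
    -- induct along the walk using closure
    have key : ∀ i ≤ m, f i ∈ D := by
      intro i
      induction i with
      | zero => intro _; rw [hfw.1]; exact hu
      | succ k IH =>
        intro hk
        exact hclose _ (IH (by omega)) _ (hr (k+1) hk) (hfw.2.2 k (by omega))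
    rw [← hfw.2.1]
    exact key m le_rfl

lemma isCompOf_eq_of_adj {D D' : Set V} (hD : IsCompOf G Ω D) (hD' : IsCompOf G Ω D')
    {a b : V} (ha : a ∈ D) (hb : b ∈ D') (h : G.Adj a b ∨ a = b) : D = D' := by
  rcases h with h | h
  · have h1 := isCompOf_eq_compOf hD ha
    have h2 := isCompOf_eq_compOf hD' hb
    have hbD : inComp G Ω a b :=
      (inComp.refl (fun hc => (hD.2.1 ha) hc)).adj h (fun hc => (hD'.2.1 hb) hc)
    rw [h1, h2, compOf_eq_of_mem hbD]
  · subst h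
    rw [isCompOf_eq_compOf hD ha, isCompOf_eq_compOf hD' hb]

/-- distinct components: disjoint and non-adjacent. -/
lemma comps_separated {D D' : Set V} (hD : IsCompOf G Ω D) (hD' : IsCompOf G Ω D')
    (hne : D ≠ D') {a b : V} (ha : a ∈ D) (hb : b ∈ D') : ¬ G.Adj a b ∧ a ≠ b := by
  constructor
  · intro h
    exact hne (isCompOf_eq_of_adj hD hD' ha hb (Or.inl h))
  · intro h
    exact hne (isCompOf_eq_of_adj hD hD' ha hb (Or.inr h))

end Comp

section Holes

lemma mod_two_lt (x n : ℕ) (h : x < 2 * n) (hn : 0 < n) :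
    x % n = x ∧ x < n ∨ x % n = x - n ∧ n ≤ x := by
  rcases Nat.lt_or_ge x n with h1 | h1
  · exact Or.inl ⟨Nat.mod_eq_of_lt h1, h1⟩
  · refine Or.inr ⟨?_, h1⟩
    rw [Nat.mod_eq_sub_mod h1, Nat.mod_eq_of_lt (by omega)]

lemma fin_sub_val {n : ℕ} (a b : Fin n) : (a - b).val = (n - b.val + a.val) % n := by
  rw [Fin.sub_def]

lemma fin_consec {n : ℕ} (h3 : 3 ≤ n) (a b : Fin n) :
    ((a - b).val = 1 ∨ (b - a).val = 1) ↔
      (a.val = b.val + 1 ∨ b.val = a.val + 1 ∨ (b.val = n - 1 ∧ a.val = 0)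
        ∨ (a.val = n - 1 ∧ b.val = 0)) := by
  have ha := a.isLt
  have hb := b.isLt
  rw [fin_sub_val, fin_sub_val]
  rcases mod_two_lt (n - b.val + a.val) n (by omega) (by omega) with ⟨e1, l1⟩ | ⟨e1, l1⟩ <;>
    rcases mod_two_lt (n - a.val + b.val) n (by omega) (by omega) with ⟨e2, l2⟩ | ⟨e2, l2⟩ <;>
      rw [e1, e2] <;> omega

lemma fin_sub_val_eq {n : ℕ} (a b : Fin n) (hn : 0 < n) :
    (a - b).val = if b.val ≤ a.val then a.val - b.val else a.val + n - b.val := by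
  have ha := a.isLt
  have hb := b.isLt
  rw [fin_sub_val]
  rcases mod_two_lt (n - b.val + a.val) n (by omega) hn with ⟨e1, l1⟩ | ⟨e1, l1⟩ <;>
    rw [e1] <;> split <;> omega

lemma fin_add_one_val {n : ℕ} [NeZero n] (h3 : 3 ≤ n) (u : Fin n) :
    (u + 1).val = if u.val + 1 < n then u.val + 1 else 0 := by
  have hu := u.isLt
  rw [Fin.add_def, Fin.val_one', Nat.mod_eq_of_lt (show 1 < n by omega)]
  show (u.val + 1) % n = _
  rcases mod_two_lt (u.val + 1) n (by omega) (by omega) with ⟨e1, l1⟩ | ⟨e1, l1⟩ <;>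
    rw [e1] <;> split <;> omega

lemma fin_succ_sub_self {n : ℕ} [NeZero n] (h3 : 3 ≤ n) (u : Fin n) :
    ((u + 1) - u).val = 1 := by
  have hu := u.isLt
  rw [fin_sub_val_eq _ _ (by omega), fin_add_one_val h3]
  split_ifs <;> omega

lemma fin_eq_add_one_of_sub {n : ℕ} [NeZero n] (h3 : 3 ≤ n) {u v : Fin n}
    (h : (u - v).val = 1) : u = v + 1 := by
  have hu := u.isLt
  have hv := v.isLt
  rw [fin_sub_val_eq _ _ (by omega)] at h
  apply Fin.val_injective
  rw [fin_add_one_val h3]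
  split_ifs at h ⊢ <;> omega

/-- Build a cycle embedding from a cyclically (exactly-)adjacent injective map. -/
lemma cycle_builder {V : Type*} {G : SimpleGraph V} {n : ℕ} [NeZero n] (h3 : 3 ≤ n)
    (c : Fin n → V) (hinj : Function.Injective c)
    (h1 : ∀ i : Fin n, G.Adj (c i) (c (i + 1)))
    (h2 : ∀ i j : Fin n, G.Adj (c i) (c j) → j = i + 1 ∨ i = j + 1) :
    Nonempty (SimpleGraph.cycleGraph n ↪g G) := by
  refine ⟨⟨⟨c, hinj⟩, ?_⟩⟩
  intro u v
  show G.Adj (c u) (c v) ↔ (SimpleGraph.cycleGraph n).Adj u v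
  rw [SimpleGraph.cycleGraph_adj']
  constructor
  · intro h
    rcases h2 _ _ h with h' | h'
    · right; rw [h']; exact fin_succ_sub_self h3 u
    · left; rw [h']; exact fin_succ_sub_self h3 v
  · intro h
    rcases h with h | h
    · rw [fin_eq_add_one_of_sub h3 h]
      exact (h1 v).symm
    · rw [fin_eq_add_one_of_sub h3 h]
      exact h1 u

/-- Two internally-disjoint, mutually non-adjacent chordless paths between two
non-adjacent vertices, with total length at least 5, give a long hole. -/
lemma two_arc {V : Type*} {G : SimpleGraph V} (hG : LongHoleFree G) {x y : V}
    {m1 m2 : ℕ} {f1 f2 : ℕ → V}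
    (h1 : FW G x y m1 f1) (hc1 : FWChordless G m1 f1) (hi1 : FWInj m1 f1)
    (h2 : FW G x y m2 f2) (hc2 : FWChordless G m2 f2) (hi2 : FWInj m2 f2)
    (hm1 : 2 ≤ m1) (hm2 : 2 ≤ m2) (htot : 5 ≤ m1 + m2)
    (hcross : ∀ i j, 0 < i → i < m1 → 0 < j → j < m2 →
      ¬ G.Adj (f1 i) (f2 j) ∧ f1 i ≠ f2 j) :
    False := by
  set n := m1 + m2 with hn
  haveI : NeZero n := ⟨by omega⟩
  obtain ⟨ha1, hb1, he1⟩ := h1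
  obtain ⟨ha2, hb2, he2⟩ := h2
  set cc : ℕ → V := fun a => if a ≤ m1 then f1 a else f2 (n - a) with hcc
  have hccp : ∀ a, a ≤ m1 → cc a = f1 a := by
    intro a ha; simp only [hcc, ha, if_true]
  have hccq : ∀ a, m1 ≤ a → a ≤ n → cc a = f2 (n - a) := by
    intro a hl hr
    rcases Nat.eq_or_lt_of_le hl with h | h
    · rw [hccp a (by omega), ← h, hb1]
      have h2 : n - m1 = m2 := by omega
      rw [h2, hb2]
    · simp only [hcc, if_neg (by omega : ¬ a ≤ m1)]
  -- cyclic edges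
  have hEdge : ∀ a, a < n → G.Adj (cc a) (cc ((a + 1) % n)) := by
    intro a ha
    by_cases h : a + 1 < n
    · rw [Nat.mod_eq_of_lt h]
      by_cases h' : a + 1 ≤ m1
      · rw [hccp a (by omega), hccp (a+1) h']
        exact he1 a (by omega)
      · rw [hccq a (by omega) (by omega), hccq (a+1) (by omega) (by omega)]
        have hlt : n - (a+1) < m2 := by omega
        have heq : n - (a+1) + 1 = n - a := by omega
        have := he2 (n - (a+1)) hlt
        rw [heq] at this
        exact this.symm
    · have han : a = n - 1 := by omega
      have h0 : (a + 1) % n = 0 := by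
        rw [han]
        have : n - 1 + 1 = n := by omega
        rw [this, Nat.mod_self]
      rw [h0, han, hccq (n-1) (by omega) (by omega), hccp 0 (by omega), ha1, ← ha2]
      have : n - (n - 1) = 1 := by omega
      rw [this]
      exact (he2 0 (by omega)).symm
  -- no chords
  have hNoChord : ∀ a b, a < b → b < n → b ≠ a + 1 → ¬(a = 0 ∧ b = n - 1) →
      ¬ G.Adj (cc a) (cc b) := by
    intro a b hab hbn hb1' hb2' hadj
    by_cases hbm : b ≤ m1
    · rw [hccp a (by omega), hccp b hbm] at hadj
      exact hc1 a b (by omega) (by omega) hadj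
    · by_cases ham : m1 ≤ a
      · rw [hccq a ham (by omega), hccq b (by omega) (by omega)] at hadj
        exact hc2 (n - b) (n - a) (by omega) (by omega) hadj.symm
      · -- a < m1 < b
        rw [hccp a (by omega), hccq b (by omega) (by omega)] at hadj
        rcases Nat.eq_zero_or_pos a with h0 | h0
        · subst h0
          rw [ha1, ← ha2] at hadj
          have : ¬ (b = n - 1) := fun hb => hb2' ⟨rfl, hb⟩
          exact hc2 0 (n - b) (by omega) (by omega) hadj
        · exact (hcross a (n - b) h0 (by omega) (by omega) (by omega)).1 hadj
  -- injectivity at the nat level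
  have hInj : ∀ a b, a < b → b < n → cc a ≠ cc b := by
    intro a b hab hbn heq
    by_cases hbm : b ≤ m1
    · rw [hccp a (by omega), hccp b hbm] at heq
      exact absurd (hi1 a (by omega) b (by omega) heq) (by omega)
    · by_cases ham : m1 ≤ a
      · rw [hccq a ham (by omega), hccq b (by omega) (by omega)] at heq
        have := hi2 (n - a) (by omega) (n - b) (by omega) heq
        omega
      · rw [hccp a (by omega), hccq b (by omega) (by omega)] at heq
        rcases Nat.eq_zero_or_pos a with h0 | h0
        · subst h0
          rw [ha1, ← ha2] at heq
          have := hi2 0 (by omega) (n - b) (by omega) heq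
          omega
        · exact (hcross a (n - b) h0 (by omega) (by omega) (by omega)).2 heq
  -- assemble
  set c : Fin n → V := fun i => cc i.val with hc
  have hcinj : Function.Injective c := by
    intro i j hij
    have hi := i.isLt
    have hj := j.isLt
    rcases lt_trichotomy i.val j.val with h | h | h
    · exact absurd hij (hInj i.val j.val h hj)
    · exact Fin.val_injective h
    · exact absurd hij.symm (hInj j.val i.val h hi)
  have hcedge : ∀ i : Fin n, G.Adj (c i) (c (i + 1)) := by
    intro i
    have hi := i.isLt
    have hval : (i + 1).val = (i.val + 1) % n := by
      rw [fin_add_one_val (by omega) i]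
      rcases mod_two_lt (i.val + 1) n (by omega) (by omega) with ⟨e1, l1⟩ | ⟨e1, l1⟩ <;>
        rw [e1] <;> split <;> omega
    show G.Adj (cc i.val) (cc (i+1).val)
    rw [hval]
    exact hEdge i.val hi
  have hcchord : ∀ i j : Fin n, G.Adj (c i) (c j) → j = i + 1 ∨ i = j + 1 := by
    intro i j hadj
    have hi := i.isLt
    have hj := j.isLt
    have consec : ∀ (u w : Fin n), w.val = u.val + 1 ∨ (u.val = n - 1 ∧ w.val = 0) →
        w = u + 1 := by
      intro u w hw
      apply Fin.val_injective
      rw [fin_add_one_val (by omega) u]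
      have hu := u.isLt
      split_ifs <;> omega
    rcases lt_trichotomy i.val j.val with h | h | h
    · by_cases hcons : j.val = i.val + 1
      · exact Or.inl (consec i j (Or.inl hcons))
      · by_cases hwrap : i.val = 0 ∧ j.val = n - 1
        · exact Or.inr (consec j i (Or.inr ⟨hwrap.2, hwrap.1⟩))
        · exact absurd hadj (hNoChord i.val j.val h hj hcons hwrap)
    · exfalso
      have hij : i = j := Fin.val_injective h
      subst hij
      exact G.loopless.irrefl _ hadj
    · by_cases hcons : i.val = j.val + 1
      · exact Or.inr (consec j i (Or.inl hcons))
      · by_cases hwrap : j.val = 0 ∧ i.val = n - 1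
        · exact Or.inl (consec i j (Or.inr ⟨hwrap.2, hwrap.1⟩))
        · exact absurd hadj.symm (hNoChord j.val i.val h hi hcons hwrap)
  exact (hG n (by omega)).false (cycle_builder (by omega) c hcinj hcedge hcchord).some

end Holes

section Arcs

variable {G : SimpleGraph V} {Ω : Set V}

lemma avoid_pair {A : Set V} {w : V} (hw1 : w ∉ nbhdSet G A) (hw2 : w ∉ A) {a : V}
    (ha : a ∈ A) : ¬ G.Adj w a ∧ w ≠ a :=
  ⟨fun h => hw1 ⟨hw2, a, ha, h⟩, fun h => hw2 (h ▸ ha)⟩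

/-- A chordless injective walk between two non-adjacent neighbours of a component,
with interior inside the component. -/
lemma arc_exists {D : Set V} (hD : IsCompOf G Ω D) {x y : V}
    (hx : x ∈ nbhdSet G D) (hy : y ∈ nbhdSet G D) (hxy : x ≠ y) (hnadj : ¬ G.Adj x y) :
    ∃ m f, FW G x y m f ∧ FWChordless G m f ∧ FWInj m f ∧ 2 ≤ m ∧
      (∀ i, 0 < i → i < m → f i ∈ D) := by
  obtain ⟨hxD, d, hd, hxd⟩ := hx
  obtain ⟨hyD, e, he, hye⟩ := hy
  have hDd : D = compOf G Ω d := isCompOf_eq_compOf hD hd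
  have hin : inComp G Ω d e := by rw [hDd] at he; exact he
  obtain ⟨m0, f0, hfw0, hr0⟩ := hin
  have hr0' : ∀ i ≤ m0, f0 i ∈ D := by
    rw [hDd]; exact fun i hi => fw_mem_compOf hfw0 hr0 i hi
  set U : Set V := insert x (insert y D) with hU
  have hfe1 : FW G x d 1 (fun r => if r = 0 then x else d) := by
    refine ⟨by simp, by simp, ?_⟩
    intro i hi
    have : i = 0 := by omega
    subst this
    simpa using hxd
  have hfe2 : FW G e y 1 (fun r => if r = 0 then e else y) := by
    refine ⟨by simp, by simp, ?_⟩
    intro i hi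
    have : i = 0 := by omega
    subst this
    simpa using hye.symm
  have hmid : FW G d y (m0 + 1)
      (fun t => if t ≤ m0 then f0 t else (fun r => if r = 0 then e else y) (t - m0)) :=
    fw_concat hfw0 hfe2
  have hbig : FW G x y (1 + (m0 + 1))
      (fun t => if t ≤ 1 then (fun r => if r = 0 then x else d) t
        else (fun t => if t ≤ m0 then f0 t else (fun r => if r = 0 then e else y) (t - m0))
          (t - 1)) :=
    fw_concat hfe1 hmid
  have r1 : ∀ t ≤ 1, (fun r => if r = 0 then x else d) t ∈ U := by
    intro t ht
    by_cases h : t = 0 <;> simp only [h, if_true, if_false]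
    · exact Set.mem_insert _ _
    · exact Set.mem_insert_of_mem _ (Set.mem_insert_of_mem _ hd)
  have r0 : ∀ t ≤ m0, f0 t ∈ U :=
    fun t ht => Set.mem_insert_of_mem _ (Set.mem_insert_of_mem _ (hr0' t ht))
  have r2 : ∀ t ≤ 1, (fun r => if r = 0 then e else y) t ∈ U := by
    intro t ht
    by_cases h : t = 0 <;> simp only [h, if_true, if_false]
    · exact Set.mem_insert_of_mem _ (Set.mem_insert_of_mem _ (hfw0.2.1 ▸ hr0' m0 le_rfl))
    · exact Set.mem_insert_of_mem _ (Set.mem_insert _ _)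
  have rmid : ∀ t ≤ m0 + 1,
      (fun t => if t ≤ m0 then f0 t else (fun r => if r = 0 then e else y) (t - m0)) t ∈ U :=
    fw_concat_range r0 r2
  have hrange : ∀ i ≤ 1 + (m0 + 1),
      (fun t => if t ≤ 1 then (fun r => if r = 0 then x else d) t
        else (fun t => if t ≤ m0 then f0 t else (fun r => if r = 0 then e else y) (t - m0))
          (t - 1)) i ∈ U :=
    fw_concat_range r1 rmid
  obtain ⟨m, f, hfw, hfU, hch, hinj, -⟩ := exists_good_fw _ _ hbig hrange
  have hm0 : m ≠ 0 := by
    intro h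
    subst h
    exact hxy (by rw [← hfw.1, hfw.2.1])
  have hm1 : m ≠ 1 := by
    intro h
    subst h
    have := hfw.2.2 0 (by omega)
    rw [hfw.1, hfw.2.1] at this
    exact hnadj this
  refine ⟨m, f, hfw, hch, hinj, by omega, ?_⟩
  intro i h0 hm
  have hiU := hfU i (by omega)
  rcases hiU with h | h
  · exfalso
    have : f i = f 0 := by rw [hfw.1]; exact h
    exact absurd (hinj i (by omega) 0 (by omega) this) (by omega)
  rcases h with h | h
  · exfalso
    have : f i = f m := by rw [hfw.2.1]; exact h
    exact absurd (hinj i (by omega) m (by omega) this) (by omega)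
  · exact h

/-- Concatenation of two good walks whose interiors do not interact. -/
lemma concat_good {x y z : V} {m1 m2 : ℕ} {f1 f2 : ℕ → V}
    (h1 : FW G x y m1 f1) (hc1 : FWChordless G m1 f1) (hi1 : FWInj m1 f1)
    (h2 : FW G y z m2 f2) (hc2 : FWChordless G m2 f2) (hi2 : FWInj m2 f2)
    (hcross : ∀ i j, i < m1 → 0 < j → j ≤ m2 → ¬ G.Adj (f1 i) (f2 j) ∧ f1 i ≠ f2 j) :
    FW G x z (m1 + m2) (fun t => if t ≤ m1 then f1 t else f2 (t - m1)) ∧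
    FWChordless G (m1 + m2) (fun t => if t ≤ m1 then f1 t else f2 (t - m1)) ∧
    FWInj (m1 + m2) (fun t => if t ≤ m1 then f1 t else f2 (t - m1)) := by
  set g : ℕ → V := fun t => if t ≤ m1 then f1 t else f2 (t - m1) with hg
  have hgp : ∀ a, a ≤ m1 → g a = f1 a := by
    intro a ha; simp only [hg, ha, if_true]
  have hgq : ∀ a, m1 ≤ a → g a = f2 (a - m1) := by
    intro a ha
    rcases Nat.eq_or_lt_of_le ha with h | h
    · rw [hgp a (by omega), ← h, Nat.sub_self, h1.2.1, h2.1]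
    · simp only [hg, if_neg (by omega : ¬ a ≤ m1)]
  refine ⟨fw_concat h1 h2, ?_, ?_⟩
  · intro i j hij hjm hadj
    by_cases hjm1 : j ≤ m1
    · rw [hgp i (by omega), hgp j hjm1] at hadj
      exact hc1 i j hij hjm1 hadj
    · by_cases him1 : m1 ≤ i
      · rw [hgq i him1, hgq j (by omega)] at hadj
        exact hc2 (i - m1) (j - m1) (by omega) (by omega) hadj
      · rw [hgp i (by omega), hgq j (by omega)] at hadj
        exact (hcross i (j - m1) (by omega) (by omega) (by omega)).1 hadj
  · intro i hi j hj heq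
    by_contra hne
    rcases Nat.lt_or_ge i j with hij | hij
    swap
    · have hij' : j < i := by omega
      -- symmetric; swap roles
      exact hne (by
        exfalso
        by_cases him1 : i ≤ m1
        · rw [hgp j (by omega), hgp i him1] at heq
          exact absurd (hi1 j (by omega) i (by omega) heq.symm) (by omega)
        · by_cases hjm1 : m1 ≤ j
          · rw [hgq j hjm1, hgq i (by omega)] at heq
            have := hi2 (j - m1) (by omega) (i - m1) (by omega) heq.symm
            omega
          · rw [hgp j (by omega), hgq i (by omega)] at heq
            exact (hcross j (i - m1) (by omega) (by omega) (by omega)).2 heq.symm)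
    · by_cases hjm1 : j ≤ m1
      · rw [hgp i (by omega), hgp j hjm1] at heq
        exact absurd (hi1 i (by omega) j (by omega) heq) (by omega)
      · by_cases him1 : m1 ≤ i
        · rw [hgq i him1, hgq j (by omega)] at heq
          have := hi2 (i - m1) (by omega) (j - m1) (by omega) heq
          omega
        · rw [hgp i (by omega), hgq j (by omega)] at heq
          exact (hcross i (j - m1) (by omega) (by omega) (by omega)).2 heq

/-- 5-hole construction: two components and an edge `s-w` between attachment points. -/
lemma hole5 (hG : LongHoleFree G) {A B : Set V}
    (hA : IsCompOf G Ω A) (hB : IsCompOf G Ω B) (hAB : A ≠ B) {v s w : V}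
    (hvA : v ∈ nbhdSet G A) (hsA : s ∈ nbhdSet G A)
    (hvB : v ∈ nbhdSet G B) (hwB : w ∈ nbhdSet G B)
    (hsw : G.Adj s w)
    (hvs : ¬ G.Adj v s) (hvw : ¬ G.Adj v w) (hvs' : v ≠ s) (hvw' : v ≠ w)
    (hsnB : s ∉ nbhdSet G B) (hsB : s ∉ B)
    (hwnA : w ∉ nbhdSet G A) (hwA : w ∉ A) : False := by
  obtain ⟨m1, g1, hfw1, hch1, hinj1, hm1, hint1⟩ := arc_exists hA hvA hsA hvs' hvs
  obtain ⟨m2, g2, hfw2, hch2, hinj2, hm2, hint2⟩ := arc_exists hB hvB hwB hvw' hvw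
  have hswne : s ≠ w := G.ne_of_adj hsw
  have hfe : FW G s w 1 (fun r => if r = 0 then s else w) := by
    refine ⟨by simp, by simp, ?_⟩
    intro i hi
    have : i = 0 := by omega
    subst this
    simpa using hsw
  have hche : FWChordless G 1 (fun r => if r = 0 then s else w) := by
    intro i j hij hj; omega
  have hinje : FWInj 1 (fun r => if r = 0 then s else w) := by
    intro i hi j hj heq
    interval_cases i <;> interval_cases j <;> simp_all
  have hcross1 : ∀ i j, i < m1 → 0 < j → j ≤ 1 →
      ¬ G.Adj (g1 i) ((fun r => if r = 0 then s else w) j) ∧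
        g1 i ≠ (fun r => if r = 0 then s else w) j := by
    intro i j hi hj0 hj1
    have : j = 1 := by omega
    subst this
    simp only [if_neg (by omega : ¬ (1:ℕ) = 0)]
    rcases Nat.eq_zero_or_pos i with h0 | h0
    · subst h0
      rw [hfw1.1]
      exact ⟨hvw, hvw'⟩
    · have := avoid_pair hwnA hwA (hint1 i h0 hi)
      exact ⟨fun h => this.1 h.symm, fun h => this.2 h.symm⟩
  obtain ⟨hp, hpch, hpinj⟩ := concat_good hfw1 hch1 hinj1 hfe hche hinje hcross1
  set p : ℕ → V := fun t => if t ≤ m1 then g1 t else (fun r => if r = 0 then s else w) (t - m1)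
    with hpdef
  have hpval : ∀ i, 0 < i → i < m1 + 1 → p i = g1 i := by
    intro i h0 hi
    simp only [hpdef, if_pos (by omega : i ≤ m1)]
  refine two_arc hG hp hpch hpinj hfw2 hch2 hinj2 (by omega) (by omega) (by omega) ?_
  intro i j hi0 hi hj0 hj
  have hjB := hint2 j hj0 hj
  by_cases him : i ≤ m1
  · rw [hpval i hi0 (by omega)]
    rcases Nat.eq_or_lt_of_le him with h | h
    · -- p i = g1 m1 = s
      rw [h, hfw1.2.1]
      exact ⟨fun hadj => hsnB ⟨hsB, _, hjB, hadj⟩, fun heq => hsB (heq ▸ hjB)⟩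
    · have hiA := hint1 i hi0 h
      exact comps_separated hA hB hAB hiA hjB
  · omega

/-- 6-hole construction: three components. -/
lemma hole6 (hG : LongHoleFree G) {A B C : Set V}
    (hA : IsCompOf G Ω A) (hB : IsCompOf G Ω B) (hC : IsCompOf G Ω C)
    (hAB : A ≠ B) (hAC : A ≠ C) (hBC : B ≠ C) {v s w : V}
    (hvA : v ∈ nbhdSet G A) (hsA : s ∈ nbhdSet G A)
    (hsB : s ∈ nbhdSet G B) (hwB : w ∈ nbhdSet G B)
    (hvC : v ∈ nbhdSet G C) (hwC : w ∈ nbhdSet G C)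
    (hvs : ¬ G.Adj v s) (hvw : ¬ G.Adj v w) (hsw : ¬ G.Adj s w)
    (hvs' : v ≠ s) (hvw' : v ≠ w) (hsw' : s ≠ w)
    (hvnB : v ∉ nbhdSet G B) (hvB' : v ∉ B)
    (hwnA : w ∉ nbhdSet G A) (hwA' : w ∉ A)
    (hsnC : s ∉ nbhdSet G C) (hsC' : s ∉ C) : False := by
  obtain ⟨m1, g1, hfw1, hch1, hinj1, hm1, hint1⟩ := arc_exists hA hvA hsA hvs' hvs
  obtain ⟨m2, g2, hfw2, hch2, hinj2, hm2, hint2⟩ := arc_exists hB hsB hwB hsw' hsw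
  obtain ⟨m3, g3, hfw3, hch3, hinj3, hm3, hint3⟩ := arc_exists hC hvC hwC hvw' hvw
  have hcross1 : ∀ i j, i < m1 → 0 < j → j ≤ m2 → ¬ G.Adj (g1 i) (g2 j) ∧ g1 i ≠ g2 j := by
    intro i j hi hj0 hj
    rcases Nat.eq_zero_or_pos i with h0 | h0
    · subst h0
      rw [hfw1.1]
      rcases Nat.eq_or_lt_of_le hj with h | h
      · rw [h, hfw2.2.1]
        exact ⟨hvw, hvw'⟩
      · exact avoid_pair hvnB hvB' (hint2 j hj0 h)
    · have hiA := hint1 i h0 hi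
      rcases Nat.eq_or_lt_of_le hj with h | h
      · rw [h, hfw2.2.1]
        have := avoid_pair hwnA hwA' hiA
        exact ⟨fun hadj => this.1 hadj.symm, fun heq => this.2 heq.symm⟩
      · exact comps_separated hA hB hAB hiA (hint2 j hj0 h)
  obtain ⟨hp, hpch, hpinj⟩ := concat_good hfw1 hch1 hinj1 hfw2 hch2 hinj2 hcross1
  set p : ℕ → V := fun t => if t ≤ m1 then g1 t else g2 (t - m1) with hpdef
  refine two_arc hG hp hpch hpinj hfw3 hch3 hinj3 (by omega) (by omega) (by omega) ?_
  intro i j hi0 hi hj0 hj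
  have hjC := hint3 j hj0 hj
  by_cases him : i ≤ m1
  · have hpv : p i = g1 i := by simp only [hpdef, if_pos him]
    rw [hpv]
    rcases Nat.eq_or_lt_of_le him with h | h
    · rw [h, hfw1.2.1]
      exact ⟨fun hadj => hsnC ⟨hsC', _, hjC, hadj⟩, fun heq => hsC' (heq ▸ hjC)⟩
    · exact comps_separated hA hC hAC (hint1 i hi0 h) hjC
  · have hpv : p i = g2 (i - m1) := by simp only [hpdef, if_neg him]
    rw [hpv]
    exact comps_separated hB hC hBC (hint2 (i - m1) (by omega) (by omega)) hjC

end Arcs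

section PMC

variable (G H : SimpleGraph V) (Ω : Set V)

/-- edges allowed in a minimal triangulation relative to the component structure of `G - Ω`. -/
def legal (u w : V) : Prop :=
  (u ∈ Ω ∧ w ∈ Ω) ∨ (u ∉ Ω ∧ w ∉ Ω ∧ compOf G Ω u = compOf G Ω w) ∨
  (u ∉ Ω ∧ w ∈ Ω ∧ w ∈ nbhdSet G (compOf G Ω u)) ∨
  (u ∈ Ω ∧ w ∉ Ω ∧ u ∈ nbhdSet G (compOf G Ω w))

variable {G H Ω}

lemma legal_symm {u w : V} (h : legal G Ω u w) : legal G Ω w u := by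
  rcases h with ⟨h1, h2⟩ | ⟨h1, h2, h3⟩ | ⟨h1, h2, h3⟩ | ⟨h1, h2, h3⟩
  · exact Or.inl ⟨h2, h1⟩
  · exact Or.inr (Or.inl ⟨h2, h1, h3.symm⟩)
  · exact Or.inr (Or.inr (Or.inr ⟨h2, h1, h3⟩))
  · exact Or.inr (Or.inr (Or.inl ⟨h2, h1, h3⟩))

lemma legal_of_G {u w : V} (h : G.Adj u w) : legal G Ω u w := by
  by_cases hu : u ∈ Ω <;> by_cases hw : w ∈ Ω
  · exact Or.inl ⟨hu, hw⟩
  · refine Or.inr (Or.inr (Or.inr ⟨hu, hw, ?_⟩))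
    exact ⟨fun hc => (compOf_subset hc) hu, w, mem_compOf_self hw, h⟩
  · refine Or.inr (Or.inr (Or.inl ⟨hu, hw, ?_⟩))
    exact ⟨fun hc => (compOf_subset hc) hw, u, mem_compOf_self hu, h.symm⟩
  · refine Or.inr (Or.inl ⟨hu, hw, ?_⟩)
    exact compOf_eq_of_mem ((mem_compOf_self hu).adj h hw)

variable (G H Ω) in
/-- `H` restricted to legal edges. -/
def Hgood : SimpleGraph V where
  Adj u w := H.Adj u w ∧ legal G Ω u w
  symm := ⟨fun u w ⟨h1, h2⟩ => ⟨h1.symm, legal_symm h2⟩⟩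
  loopless := ⟨fun u ⟨h1, _⟩ => H.loopless.irrefl u h1⟩

lemma Hgood_chordal (hH : IsChordal H) (hclq : H.IsClique Ω) :
    IsChordal (Hgood G H Ω) := by
  intro n hn
  constructor
  intro f
  haveI : NeZero n := ⟨by omega⟩
  set F : Fin n → V := fun i => f i with hF
  have hEdge : ∀ i : Fin n, (Hgood G H Ω).Adj (F i) (F (i + 1)) := by
    intro i
    refine f.map_rel_iff.mpr ?_
    rw [SimpleGraph.cycleGraph_adj']
    exact Or.inr (fin_succ_sub_self (by omega) i)
  have hNC : ∀ i j : Fin n, (Hgood G H Ω).Adj (F i) (F j) → j = i + 1 ∨ i = j + 1 := by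
    intro i j h
    rcases (SimpleGraph.cycleGraph_adj').mp (f.map_rel_iff.mp h) with h' | h'
    · exact Or.inr (fin_eq_add_one_of_sub (by omega) h')
    · exact Or.inl (fin_eq_add_one_of_sub (by omega) h')
  have hfinj : Function.Injective F := fun i j h => f.injective h
  have hClNC : ∀ i j : Fin n, i ≠ j → F i ∈ Ω → F j ∈ Ω → j = i + 1 ∨ i = j + 1 := by
    intro i j hne h1 h2
    refine hNC i j ⟨hclq h1 h2 (fun hc => hne (hfinj hc)), Or.inl ⟨h1, h2⟩⟩
  -- find `a` such that all Ω-vertices of the cycle are at positions a, a+1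
  have hcancel : ∀ i j : Fin n, i + 1 = j + 1 → i = j := by
    intro i j h
    have := congrArg Fin.val h
    rw [fin_add_one_val (by omega) i, fin_add_one_val (by omega) j] at this
    have hi := i.isLt
    have hj := j.isLt
    apply Fin.val_injective
    split_ifs at this <;> omega
  have ha : ∃ a : Fin n, ∀ i : Fin n, F i ∈ Ω → i = a ∨ i = a + 1 := by
    by_cases hT0 : ∀ i : Fin n, F i ∉ Ω
    · exact ⟨0, fun i hi => absurd hi (hT0 i)⟩
    · push_neg at hT0
      obtain ⟨t1, ht1⟩ := hT0
      by_cases hT1 : ∀ i : Fin n, F i ∈ Ω → i = t1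
      · exact ⟨t1, fun i hi => Or.inl (hT1 i hi)⟩
      · push_neg at hT1
        obtain ⟨t2, ht2, ht2ne⟩ := hT1
        have hstep : ∀ a : Fin n, F a ∈ Ω → F (a + 1) ∈ Ω →
            ∀ i : Fin n, F i ∈ Ω → i = a ∨ i = a + 1 := by
          intro a haΩ ha1Ω i hiΩ
          by_contra hcon
          push_neg at hcon
          obtain ⟨hia, hia1⟩ := hcon
          have c1 := hClNC i a (by intro h; exact hia h) hiΩ haΩ
          have c2 := hClNC i (a+1) (by intro h; exact hia1 h) hiΩ ha1Ω
          rcases c1 with c1 | c1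
          · -- c1 : a = i + 1
            rcases c2 with c2 | c2
            · exact hia (hcancel i a c2.symm)
            · -- c2 : i = a + 1 + 1
              rw [c1] at c2
              have hval := congrArg Fin.val c2
              rw [fin_add_one_val (by omega) (i + 1 + 1),
                fin_add_one_val (by omega) (i + 1),
                fin_add_one_val (by omega) i] at hval
              have hv := i.isLt
              split_ifs at hval <;> omega
          · exact hia1 c1
        rcases hClNC t1 t2 (fun h => ht2ne h.symm) ht1 ht2 with hc | hc
        · exact ⟨t1, hstep t1 ht1 (by rw [← hc]; exact ht2)⟩
        · exact ⟨t2, hstep t2 ht2 (by rw [← hc]; exact ht1)⟩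
  obtain ⟨a, hTa⟩ := ha
  -- positions as a.val + t mod n
  set P : ℕ → Fin n := fun t => ⟨(a.val + t) % n, Nat.mod_lt _ (by omega)⟩ with hP
  have hP0 : P 0 = a := by
    apply Fin.val_injective
    simp only [hP]
    exact Nat.mod_eq_of_lt a.isLt
  have hPsucc : ∀ t, P (t + 1) = (P t) + 1 := by
    intro t
    apply Fin.val_injective
    rw [Fin.add_def]
    simp only [hP, Fin.val_one']
    rw [Nat.mod_eq_of_lt (show 1 < n by omega), Nat.mod_add_mod, ← Nat.add_assoc]
  have hPinj : ∀ s t, s < n → t < n → P s = P t → s = t := by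
    intro s t hs ht h
    have := congrArg Fin.val h
    simp only [hP] at this
    have hv := a.isLt
    rcases mod_two_lt (a.val + s) n (by omega) (by omega) with ⟨e1, l1⟩ | ⟨e1, l1⟩ <;>
      rcases mod_two_lt (a.val + t) n (by omega) (by omega) with ⟨e2, l2⟩ | ⟨e2, l2⟩ <;>
        rw [e1, e2] at this <;> omega
  have hPa : ∀ t, 2 ≤ t → t < n → F (P t) ∉ Ω := by
    intro t h2 htn hΩ
    rcases hTa (P t) hΩ with h | h
    · rw [← hP0] at h
      have := hPinj t 0 htn (by omega) h
      omega
    · rw [← hP0, ← hPsucc 0] at h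
      have := hPinj t 1 htn (by omega) h
      omega
  -- the component of the non-Ω arc
  have hArc : ∀ r, r ≤ n - 3 →
      compOf G Ω (F (P (2 + r))) = compOf G Ω (F (P 2)) := by
    intro r
    induction r with
    | zero => intro _; rfl
    | succ k IH =>
      intro hk
      have hprev := IH (by omega)
      have hedge := hEdge (P (2 + k))
      rw [← hPsucc (2 + k)] at hedge
      have h1 : F (P (2 + k)) ∉ Ω := hPa (2 + k) (by omega) (by omega)
      have h2 : F (P (2 + k + 1)) ∉ Ω := hPa (2 + k + 1) (by omega) (by omega)
      have hleg := hedge.2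
      rcases hleg with ⟨hl, _⟩ | ⟨_, _, hl⟩ | ⟨_, hl, _⟩ | ⟨hl, _, _⟩
      · exact absurd hl h1
      · have : 2 + (k + 1) = 2 + k + 1 := by omega
        rw [this, ← hl, hprev]
      · exact absurd hl h2
      · exact absurd hl h1
  -- every non-Ω vertex has the same component
  have hComp : ∀ i : Fin n, F i ∉ Ω → compOf G Ω (F i) = compOf G Ω (F (P 2)) := by
    intro i hi
    set t : ℕ := (i.val + n - a.val) % n with ht
    have htn : t < n := Nat.mod_lt _ (by omega)
    have hit : i = P t := by
      apply Fin.val_injective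
      simp only [hP, ht]
      have hv := a.isLt
      have hiv := i.isLt
      rcases mod_two_lt (i.val + n - a.val) n (by omega) (by omega) with ⟨e1, l1⟩ | ⟨e1, l1⟩ <;>
        rw [e1] <;>
        rcases mod_two_lt (a.val + (i.val + n - a.val) % n) n
          (by rw [e1]; omega) (by omega) with ⟨e2, l2⟩ | ⟨e2, l2⟩ <;>
        rw [e1] at e2 <;> omega
    by_cases h2t : 2 ≤ t
    · rw [hit]
      have : t = 2 + (t - 2) := by omega
      rw [this]
      exact hArc (t - 2) (by omega)
    · -- t = 0 or 1 : position a or a+1, attach via the adjacent arc endpoint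
      interval_cases t
      · -- i = a = P 0 : edge from P (n-1) to P n = P 0
        have hedge := hEdge (P (n - 1))
        rw [← hPsucc (n - 1)] at hedge
        have hPn : P (n - 1 + 1) = P 0 := by
          apply Fin.val_injective
          simp only [hP]
          have : n - 1 + 1 = n := by omega
          rw [this, Nat.add_mod_right, Nat.add_zero]
        rw [hPn, ← hit] at hedge
        have h1 : F (P (n - 1)) ∉ Ω := hPa (n - 1) (by omega) (by omega)
        rcases hedge.2 with ⟨_, hl⟩ | ⟨_, _, hl⟩ | ⟨_, hl, _⟩ | ⟨hl, _, _⟩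
        · exact absurd hl hi
        · rw [← hl]
          have : n - 1 = 2 + (n - 3) := by omega
          rw [this]
          exact hArc (n - 3) (by omega)
        · exact absurd hl hi
        · exact absurd hl h1
      · -- i = a + 1 = P 1 : edge from P 1 to P 2
        have hedge := hEdge (P 1)
        rw [← hPsucc 1, ← hit] at hedge
        have h2 : F (P 2) ∉ Ω := hPa 2 (by omega) (by omega)
        rcases hedge.2 with ⟨_, hl⟩ | ⟨_, _, hl⟩ | ⟨_, hl, _⟩ | ⟨hl, _, _⟩
        · exact absurd hl h2
        · exact hl
        · exact absurd hl h2
        · exact absurd hl hi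
  -- every Ω vertex of the cycle is in the neighbourhood of that component
  have hNbhd : ∀ i : Fin n, F i ∈ Ω → F i ∈ nbhdSet G (compOf G Ω (F (P 2))) := by
    intro i hi
    have hin : i = P 0 ∨ i = P 1 := by
      rcases hTa i hi with h | h
      · exact Or.inl (by rw [h, hP0])
      · exact Or.inr (by rw [h, ← hP0, ← hPsucc 0])
    rcases hin with h | h
    · -- edge from P (n-1) to P 0 = i
      have hedge := hEdge (P (n - 1))
      rw [← hPsucc (n - 1)] at hedge
      have hPn : P (n - 1 + 1) = P 0 := by
        apply Fin.val_injective
        simp only [hP]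
        have : n - 1 + 1 = n := by omega
        rw [this, Nat.add_mod_right, Nat.add_zero]
      rw [hPn, ← h] at hedge
      have h1 : F (P (n - 1)) ∉ Ω := hPa (n - 1) (by omega) (by omega)
      rcases hedge.2 with ⟨hl, _⟩ | ⟨_, hl, _⟩ | ⟨_, _, hl⟩ | ⟨hl, _, _⟩
      · exact absurd hl h1
      · exact absurd hi hl
      · have harc : compOf G Ω (F (P (n - 1))) = compOf G Ω (F (P 2)) := by
          have : n - 1 = 2 + (n - 3) := by omega
          rw [this]
          exact hArc (n - 3) (by omega)
        rw [← harc]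
        exact hl
      · exact absurd hl h1
    · -- edge from P 1 = i to P 2
      have hedge := hEdge (P 1)
      rw [← hPsucc 1, ← h] at hedge
      have h2 : F (P 2) ∉ Ω := hPa 2 (by omega) (by omega)
      rcases hedge.2 with ⟨_, hl⟩ | ⟨hl, _, _⟩ | ⟨_, hl, _⟩ | ⟨_, _, hl⟩
      · exact absurd hl h2
      · exact absurd hi hl
      · exact absurd hl h2
      · exact hl
  -- f is then an embedding into H, contradicting chordality of H
  have hHemb : Nonempty (SimpleGraph.cycleGraph n ↪g H) := by
    refine ⟨⟨⟨F, hfinj⟩, ?_⟩⟩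
    intro u v
    show H.Adj (F u) (F v) ↔ _
    constructor
    · intro h
      refine f.map_rel_iff.mp ?_
      have hne : F u ≠ F v := H.ne_of_adj h
      refine ⟨h, ?_⟩
      by_cases hu : F u ∈ Ω <;> by_cases hv : F v ∈ Ω
      · exact Or.inl ⟨hu, hv⟩
      · refine Or.inr (Or.inr (Or.inr ⟨hu, hv, ?_⟩))
        rw [hComp v hv]
        exact hNbhd u hu
      · refine Or.inr (Or.inr (Or.inl ⟨hu, hv, ?_⟩))
        rw [hComp u hu]
        exact hNbhd v hv
      · refine Or.inr (Or.inl ⟨hu, hv, ?_⟩)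
        rw [hComp u hu, hComp v hv]
    · intro h
      exact (f.map_rel_iff.mpr h).1
  exact (hH n hn).false hHemb.some

variable {G H : SimpleGraph V} {Ω : Set V}

lemma all_edges_legal (hGH : G ≤ H) (hH : IsChordal H)
    (hmin : ∀ H', G ≤ H' → H' ≤ H → IsChordal H' → H' = H) (hclq : H.IsClique Ω) :
    ∀ u w, H.Adj u w → legal G Ω u w := by
  have hle1 : G ≤ Hgood G H Ω := fun u w h => ⟨hGH h, legal_of_G h⟩
  have hle2 : Hgood G H Ω ≤ H := fun u w h => h.1
  have heq := hmin _ hle1 hle2 (Hgood_chordal hH hclq)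
  intro u w h
  rw [← heq] at h
  exact h.2

lemma fill_nbhd (hGH : G ≤ H) (hH : IsChordal H)
    (hmin : ∀ H', G ≤ H' → H' ≤ H → IsChordal H' → H' = H) (hclq : H.IsClique Ω)
    {u w : V} (hu : u ∉ Ω) (hw : w ∈ Ω) (h : H.Adj u w) :
    w ∈ nbhdSet G (compOf G Ω u) := by
  rcases all_edges_legal hGH hH hmin hclq u w h with ⟨hl, _⟩ | ⟨_, hl, _⟩ | ⟨_, _, hl⟩
    | ⟨hl, _, _⟩
  · exact absurd hl hu
  · exact absurd hw hl
  · exact hl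
  · exact absurd hl hu

/-- chord-splitting: a short arc of the broken cycle, together with the removed
edge `x-y`, yields an induced cycle in `Kb`; so both arcs are short. -/
lemma arc_emb {K Kb : SimpleGraph V} {x y : V} (hle : K ≤ Kb)
    (hdiff : ∀ u w, Kb.Adj u w → ¬ K.Adj u w → ((u = x ∧ w = y) ∨ (u = y ∧ w = x)))
    (hKb : IsChordal Kb) (hxyKb : Kb.Adj x y)
    {n : ℕ} [NeZero n] (hn : 4 ≤ n) (f : SimpleGraph.cycleGraph n ↪g K)
    {i j : Fin n} (hfi : f i = x) (hfj : f j = y)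
    (hd2 : 2 ≤ (j - i).val) (hd2' : (j - i).val ≤ n - 2) : (j - i).val ≤ 2 := by
  by_contra hgt
  push_neg at hgt
  obtain ⟨d, hd⟩ : ∃ d, (j - i).val = d := ⟨_, rfl⟩
  rw [hd] at hd2 hd2' hgt
  have hiv := i.isLt
  have hjv := j.isLt
  have hdval : d = if i.val ≤ j.val then j.val - i.val else j.val + n - i.val := by
    rw [← hd, fin_sub_val_eq _ _ (by omega)]
  haveI : NeZero (d + 1) := ⟨by omega⟩
  have hcast : d + 1 ≤ n := by split at hdval <;> omega
  set c : Fin (d + 1) → V := fun t => f (i + Fin.castLE hcast t) with hc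
  have hjval : j.val = (i.val + d) % n := by
    rcases mod_two_lt (i.val + d) n (by omega) (by omega) with ⟨e1, l1⟩ | ⟨e1, l1⟩ <;>
      rw [e1] <;> split at hdval <;> omega
  have hvadd : ∀ t : Fin (d + 1), (i + Fin.castLE hcast t).val = (i.val + t.val) % n := by
    intro t
    rw [Fin.add_def]
    rfl
  have haddinj : ∀ s t : Fin (d + 1), (i + Fin.castLE hcast s) = (i + Fin.castLE hcast t)
      → s = t := by
    intro s t h
    have hs := s.isLt
    have ht := t.isLt
    have hveq := congrArg Fin.val h
    rw [hvadd, hvadd] at hveq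
    apply Fin.val_injective
    rcases mod_two_lt (i.val + s.val) n (by omega) (by omega) with ⟨e1, l1⟩ | ⟨e1, l1⟩ <;>
      rcases mod_two_lt (i.val + t.val) n (by omega) (by omega) with ⟨e2, l2⟩ | ⟨e2, l2⟩ <;>
      rw [e1, e2] at hveq <;> omega
  have hitopj : i + Fin.castLE hcast ⟨d, by omega⟩ = j := by
    apply Fin.val_injective
    rw [hvadd]
    exact hjval.symm
  have hinj : Function.Injective c := fun s t h => haddinj s t (f.injective h)
  have hconsecn : ∀ s t : Fin (d + 1), t.val = s.val + 1 →
      (SimpleGraph.cycleGraph n).Adj (i + Fin.castLE hcast s) (i + Fin.castLE hcast t) := by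
    intro s t hst
    rw [SimpleGraph.cycleGraph_adj']
    right
    rw [fin_sub_val_eq _ _ (by omega), hvadd, hvadd, hst]
    have hs := s.isLt
    have ht := t.isLt
    rcases mod_two_lt (i.val + s.val) n (by omega) (by omega) with ⟨e1, l1⟩ | ⟨e1, l1⟩ <;>
      rcases mod_two_lt (i.val + (s.val + 1)) n (by omega) (by omega) with ⟨e2, l2⟩ | ⟨e2, l2⟩ <;>
      rw [e1, e2] <;> split <;> omega
  have hedges : ∀ t : Fin (d + 1), Kb.Adj (c t) (c (t + 1)) := by
    intro t
    have ht := t.isLt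
    by_cases h : t.val < d
    · have hval : (t + 1).val = t.val + 1 := by
        rw [fin_add_one_val (by omega) t]
        split <;> omega
      exact hle (f.map_rel_iff.mpr (hconsecn t (t + 1) hval))
    · have htd : t.val = d := by omega
      have ht1 : (t + 1).val = 0 := by
        rw [fin_add_one_val (by omega) t]
        split <;> omega
      have hct : c t = y := by
        show f (i + Fin.castLE hcast t) = y
        have heq : (⟨d, by omega⟩ : Fin (d+1)) = t := by
          apply Fin.val_injective; exact htd.symm
        rw [← heq, hitopj, hfj]
      have hct1 : c (t + 1) = x := by
        show f (i + Fin.castLE hcast (t + 1)) = x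
        have h0 : (i + Fin.castLE hcast (t + 1)) = i := by
          apply Fin.val_injective
          rw [hvadd, ht1]
          simpa using Nat.mod_eq_of_lt hiv
        rw [h0, hfi]
      rw [hct, hct1]
      exact hxyKb.symm
  have hconsec : ∀ u w : Fin (d + 1), w.val = u.val + 1 ∨ (u.val = d ∧ w.val = 0) →
      w = u + 1 := by
    intro u w hw
    apply Fin.val_injective
    rw [fin_add_one_val (by omega) u]
    have hu := u.isLt
    have hwv := w.isLt
    split <;> omega
  have hchords : ∀ s t : Fin (d + 1), Kb.Adj (c s) (c t) → t = s + 1 ∨ s = t + 1 := by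
    intro s t hadj
    have hs := s.isLt
    have ht := t.isLt
    by_cases hK : K.Adj (c s) (c t)
    · have hcyc := f.map_rel_iff.mp hK
      rw [SimpleGraph.cycleGraph_adj'] at hcyc
      have hvs := hvadd s
      have hvt := hvadd t
      rcases hcyc with h' | h'
      · -- (i+s) - (i+t) = 1 : s = t + 1
        have hst : s.val = t.val + 1 := by
          rw [fin_sub_val_eq _ _ (by omega), hvs, hvt] at h'
          rcases mod_two_lt (i.val + s.val) n (by omega) (by omega) with ⟨e1, l1⟩ | ⟨e1, l1⟩ <;>
            rcases mod_two_lt (i.val + t.val) n (by omega) (by omega) with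
              ⟨e2, l2⟩ | ⟨e2, l2⟩ <;>
            rw [e1, e2] at h' <;> split at h' <;> omega
        exact Or.inr (hconsec t s (Or.inl hst))
      · have hst : t.val = s.val + 1 := by
          rw [fin_sub_val_eq _ _ (by omega), hvs, hvt] at h'
          rcases mod_two_lt (i.val + s.val) n (by omega) (by omega) with ⟨e1, l1⟩ | ⟨e1, l1⟩ <;>
            rcases mod_two_lt (i.val + t.val) n (by omega) (by omega) with
              ⟨e2, l2⟩ | ⟨e2, l2⟩ <;>
            rw [e1, e2] at h' <;> split at h' <;> omega
        exact Or.inl (hconsec s t (Or.inl hst))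
    · have hz : i + Fin.castLE hcast ⟨0, by omega⟩ = i := by
        apply Fin.val_injective
        rw [hvadd]
        simpa using Nat.mod_eq_of_lt hiv
      have hzero : ∀ u : Fin (d + 1), c u = x → u.val = 0 := by
        intro u hu
        have hu' : f (i + Fin.castLE hcast u) = x := hu
        have heq2 : i + Fin.castLE hcast u = i + Fin.castLE hcast ⟨0, by omega⟩ :=
          f.injective (hu'.trans
            (Eq.symm (show f (i + Fin.castLE hcast ⟨0, by omega⟩) = x by rw [hz, hfi])))
        have := haddinj u ⟨0, by omega⟩ heq2
        rw [this]
      have hdd : ∀ u : Fin (d + 1), c u = y → u.val = d := by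
        intro u hu
        have hu' : f (i + Fin.castLE hcast u) = y := hu
        have heq2 : i + Fin.castLE hcast u = i + Fin.castLE hcast ⟨d, by omega⟩ :=
          f.injective (hu'.trans
            (Eq.symm (show f (i + Fin.castLE hcast ⟨d, by omega⟩) = y by rw [hitopj, hfj])))
        have := haddinj u ⟨d, by omega⟩ heq2
        rw [this]
      rcases hdiff _ _ hadj hK with ⟨h1, h2⟩ | ⟨h1, h2⟩
      · exact Or.inr (hconsec t s (Or.inr ⟨hdd t h2, hzero s h1⟩))
      · exact Or.inl (hconsec s t (Or.inr ⟨hdd s h1, hzero t h2⟩))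
  have hemb := cycle_builder (by omega) c hinj hedges hchords
  exact (hKb (d + 1) (by omega)).false hemb.some

/-- every non-adjacent pair of `Ω` is covered by a component of `G - Ω`. -/
lemma cover (hGH : G ≤ H) (hH : IsChordal H)
    (hmin : ∀ H', G ≤ H' → H' ≤ H → IsChordal H' → H' = H) (hclq : H.IsClique Ω)
    {x y : V} (hx : x ∈ Ω) (hy : y ∈ Ω) (hxy : x ≠ y) (hnadj : ¬ G.Adj x y) :
    ∃ D, IsCompOf G Ω D ∧ x ∈ nbhdSet G D ∧ y ∈ nbhdSet G D := by
  classical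
  have hxyH : H.Adj x y := hclq hx hy hxy
  set He : SimpleGraph V :=
    { Adj := fun u w => H.Adj u w ∧ ¬(u = x ∧ w = y) ∧ ¬(u = y ∧ w = x)
      symm := by
        refine ⟨?_⟩
        rintro u w ⟨h1, h2, h3⟩
        exact ⟨h1.symm, fun ⟨ha, hb⟩ => h3 ⟨hb, ha⟩, fun ⟨ha, hb⟩ => h2 ⟨hb, ha⟩⟩
      loopless := ⟨fun u h => H.loopless.irrefl u h.1⟩ } with hHe
  have hGle : G ≤ He := by
    intro u w h
    refine ⟨hGH h, ?_, ?_⟩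
    · rintro ⟨rfl, rfl⟩; exact hnadj h
    · rintro ⟨rfl, rfl⟩; exact hnadj h.symm
  have hHle : He ≤ H := fun u w h => h.1
  have hne : He ≠ H := by
    intro heq
    have : He.Adj x y := by rw [heq]; exact hxyH
    exact this.2.1 ⟨rfl, rfl⟩
  have hnch : ¬ IsChordal He := fun hch => hne (hmin He hGle hHle hch)
  unfold IsChordal at hnch
  push_neg at hnch
  obtain ⟨n, hn4, hemb⟩ := hnch
  obtain ⟨f⟩ := hemb
  haveI hNZ : NeZero n := ⟨by omega⟩
  have hdiff : ∀ u w, H.Adj u w → ¬ He.Adj u w → ((u = x ∧ w = y) ∨ (u = y ∧ w = x)) := by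
    intro u w h1 h2
    by_contra hcon
    push_neg at hcon
    exact h2 ⟨h1, fun hc => hcon.1 hc.1 hc.2, fun hc => hcon.2 hc.1 hc.2⟩
  -- find a chord of the embedded cycle in H; it must be the pair {x, y}
  have hchord : ∃ i j : Fin n, f i = x ∧ f j = y ∧ ¬ (SimpleGraph.cycleGraph n).Adj i j := by
    have hex : ∃ i j : Fin n, ¬ (SimpleGraph.cycleGraph n).Adj i j ∧ i ≠ j ∧
        H.Adj (f i) (f j) := by
      by_contra hno
      push_neg at hno
      have : Nonempty (SimpleGraph.cycleGraph n ↪g H) := by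
        refine ⟨⟨⟨fun i => f i, fun a b h => f.injective h⟩, ?_⟩⟩
        intro u v
        constructor
        · intro h
          by_contra hc
          have huv : u ≠ v := fun he => by
            subst he
            exact H.loopless.irrefl _ h
          exact (hno u v hc huv) h
        · intro h
          exact hHle (f.map_rel_iff.mpr h)
      exact (hH n hn4).false this.some
    obtain ⟨i, j, hnc, hijne, hadj⟩ := hex
    have hnHe : ¬ He.Adj (f i) (f j) := fun h => hnc (f.map_rel_iff.mp h)
    rcases hdiff _ _ hadj hnHe with ⟨h1, h2⟩ | ⟨h1, h2⟩
    · exact ⟨i, j, h1, h2, hnc⟩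
    · exact ⟨j, i, h2, h1, fun h => hnc h.symm⟩
  obtain ⟨i, j, hfi, hfj, hnc⟩ := hchord
  have hijne : i ≠ j := by
    intro h
    subst h
    exact hxy (hfi.symm.trans hfj)
  have hiv := i.isLt
  have hjv := j.isLt
  -- 2 ≤ d ≤ n - 2 for d = (j - i).val
  have hsubne : (j - i).val ≠ 0 := by
    rw [fin_sub_val_eq _ _ (by omega)]
    have : i.val ≠ j.val := fun h => hijne (Fin.val_injective h)
    split <;> omega
  have hsub_sum : (j - i).val + (i - j).val = n := by
    rw [fin_sub_val_eq _ _ (by omega), fin_sub_val_eq _ _ (by omega)]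
    have : i.val ≠ j.val := fun h => hijne (Fin.val_injective h)
    split <;> split <;> omega
  have hnc' : (j - i).val ≠ 1 ∧ (i - j).val ≠ 1 := by
    constructor <;> intro h <;> apply hnc <;> rw [SimpleGraph.cycleGraph_adj']
    · exact Or.inr h
    · exact Or.inl h
  have hd2 : 2 ≤ (j - i).val := by omega
  have hd2' : (j - i).val ≤ n - 2 := by
    have h0 : (i - j).val ≠ 0 := by omega
    omega
  have hle2 := arc_emb hHle hdiff hH hxyH hn4 f hfi hfj hd2 hd2'
  have hle2' := arc_emb hHle (fun u w h1 h2 => ((hdiff u w h1 h2).symm.imp id id))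
    hH hxyH.symm hn4 f hfj hfi (by omega) (by omega)
  have hn4' : n = 4 := by omega
  subst hn4'
  clear hNZ
  -- now n = 4 and (j - i).val = 2, so j = i + 2
  have hd22 : (j - i).val = 2 := by omega
  have key1 : ∀ u w : Fin 4, (w - u).val = 2 → w = u + 2 := by decide
  have key2 : ∀ u : Fin 4, (SimpleGraph.cycleGraph 4).Adj u (u + 1) := by decide
  have key3 : ∀ u : Fin 4, (SimpleGraph.cycleGraph 4).Adj (u + 1) (u + 2) := by decide
  have key4 : ∀ u : Fin 4, (SimpleGraph.cycleGraph 4).Adj (u + 2) (u + 3) := by decide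
  have key5 : ∀ u : Fin 4, (SimpleGraph.cycleGraph 4).Adj (u + 3) u := by decide
  have key6 : ∀ u : Fin 4, ¬ (SimpleGraph.cycleGraph 4).Adj (u + 1) (u + 3) := by decide
  have key7 : ∀ u : Fin 4, u + 1 ≠ u ∧ u + 1 ≠ u + 2 ∧ u + 3 ≠ u ∧ u + 3 ≠ u + 2 ∧
      u + 1 ≠ u + 3 := by decide
  have hji : j = i + 2 := key1 i j hd22
  set a : V := f (i + 1) with ha
  set b : V := f (i + 3) with hb
  have hedge : ∀ u w : Fin 4, (SimpleGraph.cycleGraph 4).Adj u w → H.Adj (f u) (f w) :=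
    fun u w h => hHle (f.map_rel_iff.mpr h)
  have e1 : H.Adj x a := by
    rw [← hfi, ha]; exact hedge i (i + 1) (key2 i)
  have e2 : H.Adj a y := by
    rw [← hfj, ha, hji]; exact hedge (i + 1) (i + 2) (key3 i)
  have e3 : H.Adj y b := by
    rw [← hfj, hb, hji]; exact hedge (i + 2) (i + 3) (key4 i)
  have e4 : H.Adj b x := by
    rw [← hfi, hb]; exact hedge (i + 3) i (key5 i)
  have hane1 : a ≠ x := by
    rw [ha, ← hfi]; intro h; exact (key7 i).1 (f.injective h)
  have hane2 : a ≠ y := by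
    rw [ha, ← hfj, hji]; intro h; exact (key7 i).2.1 (f.injective h)
  have hane3 : b ≠ x := by
    rw [hb, ← hfi]; intro h; exact (key7 i).2.2.1 (f.injective h)
  have hane4 : b ≠ y := by
    rw [hb, ← hfj, hji]; intro h; exact (key7 i).2.2.2.1 (f.injective h)
  have hane5 : a ≠ b := by
    rw [ha, hb]; intro h; exact (key7 i).2.2.2.2 (f.injective h)
  have hnab : ¬ H.Adj a b := by
    intro h
    have hnHe : ¬ He.Adj a b := by
      intro hc
      exact key6 i (f.map_rel_iff.mp hc)
    rcases hdiff _ _ h hnHe with ⟨h1, h2⟩ | ⟨h1, h2⟩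
    · exact hane1 h1
    · exact hane2 h1
  -- one of a, b is outside Ω
  have hout : a ∉ Ω ∨ b ∉ Ω := by
    by_contra hcon
    push_neg at hcon
    exact hnab (hclq hcon.1 hcon.2 hane5)
  rcases hout with hout | hout
  · refine ⟨compOf G Ω a, compOf_isCompOf hout, ?_, ?_⟩
    · exact fill_nbhd hGH hH hmin hclq hout hx e1.symm
    · exact fill_nbhd hGH hH hmin hclq hout hy e2
  · refine ⟨compOf G Ω b, compOf_isCompOf hout, ?_, ?_⟩
    · exact fill_nbhd hGH hH hmin hclq hout hx e4
    · exact fill_nbhd hGH hH hmin hclq hout hy e3.symm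

end PMC

end Aux

theorem stmt14 [Fintype V] (G : SimpleGraph V) (hG : LongHoleFree G)
    (Ω : Set V) (hΩ : IsPMC G Ω) (v : V) (hv : v ∈ Ω) :
    Ω ⊆ insert v (G.neighborSet v) ∨
    ∃ D, IsCompOf G Ω D ∧ Ω \ G.neighborSet v ⊆ nbhdSet G D ∧ v ∈ nbhdSet G D := by
  classical
  obtain ⟨H, hGH, hH, hmin, hclq, hmax⟩ := hΩ
  by_cases hleft : Ω ⊆ insert v (G.neighborSet v)
  · exact Or.inl hleft
  right
  rw [Set.not_subset] at hleft
  obtain ⟨w0, hw0Ω, hw0n⟩ := hleft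
  simp only [Set.mem_insert_iff, SimpleGraph.mem_neighborSet, not_or] at hw0n
  obtain ⟨hw0v, hw0adj⟩ := hw0n
  set W : Set V := {w | w ∈ Ω ∧ ¬ G.Adj v w ∧ w ≠ v} with hWdef
  have hw0W : w0 ∈ W := ⟨hw0Ω, hw0adj, hw0v⟩
  have hWmem : ∀ w ∈ W, w ∈ Ω ∧ ¬ G.Adj v w ∧ w ≠ v := fun w hw => hw
  have hnotin : ∀ (D : Set V), IsCompOf G Ω D → ∀ w ∈ Ω, w ∉ D :=
    fun D hD w hw hmem => (hD.2.1 hmem) hw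
  have hcover : ∀ w ∈ W, ∃ D, IsCompOf G Ω D ∧ v ∈ nbhdSet G D ∧ w ∈ nbhdSet G D := by
    intro w hw
    exact cover hGH hH hmin hclq hv (hWmem w hw).1 (Ne.symm (hWmem w hw).2.2)
      (hWmem w hw).2.1
  set Cv : Set (Set V) := {D | IsCompOf G Ω D ∧ v ∈ nbhdSet G D} with hCv
  have hCvne : Cv.Nonempty := by
    obtain ⟨D, h1, h2, h3⟩ := hcover w0 hw0W
    exact ⟨D, h1, h2⟩
  obtain ⟨Dm, hDmCv, hDmmax⟩ := Set.Finite.exists_maximalFor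
    (fun D => (nbhdSet G D ∩ W).ncard) Cv (Set.toFinite Cv) hCvne
  set S : Set V := nbhdSet G Dm ∩ W with hSdef
  by_cases hSW : W ⊆ nbhdSet G Dm
  · refine ⟨Dm, hDmCv.1, ?_, hDmCv.2⟩
    intro x hx
    rw [Set.mem_diff, SimpleGraph.mem_neighborSet] at hx
    by_cases hxv : x = v
    · rw [hxv]; exact hDmCv.2
    · exact hSW ⟨hx.1, hx.2, hxv⟩
  · rw [Set.not_subset] at hSW
    obtain ⟨w2, hw2W, hw2n⟩ := hSW
    obtain ⟨hw2Ω, hw2adj, hw2v⟩ := hWmem w2 hw2W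
    set Cc : Set (Set V) := {C | IsCompOf G Ω C ∧ v ∈ nbhdSet G C ∧ w2 ∈ nbhdSet G C}
      with hCc
    have hCcne : Cc.Nonempty := by
      obtain ⟨D, h1, h2, h3⟩ := hcover w2 hw2W
      exact ⟨D, h1, h2, h3⟩
    obtain ⟨Cm, hCmCc, hCmmax⟩ := Set.Finite.exists_maximalFor
      (fun C => (nbhdSet G C ∩ S).ncard) Cc (Set.toFinite Cc) hCcne
    obtain ⟨hCm, hvCm, hw2Cm⟩ := hCmCc
    obtain ⟨hDm, hvDm⟩ := hDmCv
    have hDmCmne : Dm ≠ Cm := by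
      intro h
      rw [h] at hw2n
      exact hw2n hw2Cm
    exfalso
    by_cases hSC : S ⊆ nbhdSet G Cm
    · -- Cm strictly beats Dm
      have hCmCv : Cm ∈ Cv := ⟨hCm, hvCm⟩
      have hsub : insert w2 S ⊆ nbhdSet G Cm ∩ W := by
        intro x hx
        rcases Set.mem_insert_iff.mp hx with h | h
        · exact ⟨by rw [h]; exact hw2Cm, by rw [h]; exact hw2W⟩
        · exact ⟨hSC h, h.2⟩
      have hw2S : w2 ∉ S := fun h => hw2n h.1
      have hlt : (nbhdSet G Dm ∩ W).ncard < (nbhdSet G Cm ∩ W).ncard := by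
        have h1 : (insert w2 S).ncard = S.ncard + 1 :=
          Set.ncard_insert_of_notMem hw2S (Set.toFinite S)
        have h2 : (insert w2 S).ncard ≤ (nbhdSet G Cm ∩ W).ncard :=
          Set.ncard_le_ncard hsub (Set.toFinite _)
        have h3 : S.ncard = (nbhdSet G Dm ∩ W).ncard := rfl
        omega
      have heqm : (nbhdSet G Dm ∩ W).ncard = (nbhdSet G Cm ∩ W).ncard :=
        le_antisymm (le_of_lt hlt) (hDmmax hCmCv (le_of_lt hlt))
      omega
    · rw [Set.not_subset] at hSC
      obtain ⟨s0, hs0S, hs0n⟩ := hSC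
      obtain ⟨hs0Dm, hs0W⟩ := hs0S
      obtain ⟨hs0Ω, hs0adj, hs0v⟩ := hWmem s0 hs0W
      have hs0w2ne : s0 ≠ w2 := by
        intro h
        rw [h] at hs0Dm
        exact hw2n hs0Dm
      -- s0 and w2 are non-adjacent, else a 5-hole
      have hs0w2 : ¬ G.Adj s0 w2 := by
        intro hadj
        exact hole5 hG hDm hCm hDmCmne hvDm hs0Dm hvCm hw2Cm hadj hs0adj hw2adj
          (Ne.symm hs0v) (Ne.symm hw2v) hs0n (hnotin Cm hCm s0 hs0Ω)
          hw2n (hnotin Dm hDm w2 hw2Ω)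
      obtain ⟨D', hD', hs0D', hw2D'⟩ :=
        cover hGH hH hmin hclq hs0Ω hw2Ω hs0w2ne hs0w2
      have hDmD'ne : Dm ≠ D' := by
        intro h
        rw [← h] at hw2D'
        exact hw2n hw2D'
      have hD'Cmne : D' ≠ Cm := by
        intro h
        rw [h] at hs0D'
        exact hs0n hs0D'
      -- v attaches to D', else a 6-hole
      have hvD' : v ∈ nbhdSet G D' := by
        by_contra hvn
        exact hole6 hG hDm hD' hCm hDmD'ne hDmCmne hD'Cmne hvDm hs0Dm hs0D' hw2D'
          hvCm hw2Cm hs0adj hw2adj hs0w2 (Ne.symm hs0v) (Ne.symm hw2v) hs0w2ne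
          hvn (hnotin D' hD' v hv) hw2n (hnotin Dm hDm w2 hw2Ω)
          hs0n (hnotin Cm hCm s0 hs0Ω)
      have hD'Cc : D' ∈ Cc := ⟨hD', hvD', hw2D'⟩
      by_cases hcomp : (nbhdSet G Cm ∩ S) ⊆ nbhdSet G D'
      · -- D' strictly beats Cm
        have hssub : (nbhdSet G Cm ∩ S) ⊂ (nbhdSet G D' ∩ S) := by
          constructor
          · intro x hx
            exact ⟨hcomp hx, hx.2⟩
          · intro hsub
            exact hs0n (hsub ⟨hs0D', hs0Dm, hs0W⟩).1
        have hlt := Set.ncard_lt_ncard hssub (Set.toFinite _)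
        have heqm : (nbhdSet G Cm ∩ S).ncard = (nbhdSet G D' ∩ S).ncard :=
          le_antisymm (le_of_lt hlt) (hCmmax hD'Cc (le_of_lt hlt))
        omega
      · rw [Set.not_subset] at hcomp
        obtain ⟨s2, hs2, hs2n⟩ := hcomp
        obtain ⟨hs2Cm, hs2S⟩ := hs2
        obtain ⟨hs2Dm, hs2W⟩ := hs2S
        obtain ⟨hs2Ω, hs2adj, hs2v⟩ := hWmem s2 hs2W
        have hs0s2ne : s0 ≠ s2 := by
          intro h
          rw [h] at hs0n
          exact hs0n hs2Cm
        have hs2w2ne : s2 ≠ w2 := by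
          intro h
          rw [h] at hs2Dm
          exact hw2n hs2Dm
        -- s2 and w2 non-adjacent, else a 5-hole through Dm and D'
        have hs2w2 : ¬ G.Adj s2 w2 := by
          intro hadj
          exact hole5 hG hDm hD' hDmD'ne hvDm hs2Dm hvD' hw2D' hadj hs2adj hw2adj
            (Ne.symm hs2v) (Ne.symm hw2v) hs2n (hnotin D' hD' s2 hs2Ω)
            hw2n (hnotin Dm hDm w2 hw2Ω)
        -- s0 and s2 adjacent : 5-hole through Cm and D'
        by_cases hs0s2 : G.Adj s0 s2
        · exact hole5 hG hCm hD' (Ne.symm hD'Cmne) hw2Cm hs2Cm hw2D' hs0D'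
            hs0s2.symm (fun h => hs2w2 h.symm) (fun h => hs0w2 h.symm)
            (Ne.symm hs2w2ne) (Ne.symm hs0w2ne) hs2n (hnotin D' hD' s2 hs2Ω)
            hs0n (hnotin Cm hCm s0 hs0Ω)
        -- all non-adjacent : 6-hole through Dm, Cm, D'
        · exact hole6 hG hDm hCm hD' hDmCmne hDmD'ne hD'Cmne.symm hs0Dm hs2Dm
            hs2Cm hw2Cm hs0D' hw2D' hs0s2 hs0w2 hs2w2 hs0s2ne hs0w2ne hs2w2ne
            hs0n (hnotin Cm hCm s0 hs0Ω) hw2n (hnotin Dm hDm w2 hw2Ω)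
            hs2n (hnotin D' hD' s2 hs2Ω)
end
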